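/- arXiv:2105.00784 — 4 statements merged into one kernel-verified Lean document; each statement's English description precedes it below -/
import Mathlib

section
/- If a substitution σ of size (m,n) has a determining position, then for every k ≥ 1 the iterated substitution σ^k (of size (m^k, n^k)) has a determining position. -/
/-- A two-dimensional substitution over alphabet `A`. -/
def Subst (A : Type*) := A → ℕ → ℕ → A

/-- `(i,j)` is a determining position for `σ`. -/
def DetPos {A : Type*} (σ : Subst A) (i j : ℕ) : Prop :=
  ∀ a b : A, σ a i j = σ b i j → a = b

/-- Composition of a substitution `σ` of size `(m,n)` with a substitution `σ'`:
each letter of the image of `σ'` is replaced by its `σ`-image. -/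
def compSub {A : Type*} (m n : ℕ) (σ σ' : Subst A) : Subst A :=
  fun a x y => σ (σ' a (x / m) (y / n)) (x % m) (y % n)

/-- The `k`-th iterate of a substitution `σ` of size `(m,n)`; `σ^k` has size
`(m^k, n^k)`. -/
def iterSub {A : Type*} (m n : ℕ) (σ : Subst A) : ℕ → Subst A
  | 0 => fun a _ _ => a
  | k + 1 => compSub m n σ (iterSub m n σ k)

/-- If a substitution `σ` of size `(m,n)` has a determining position, then for
every `k ≥ 1`, `σ^k` (of size `(m^k, n^k)`) has a determining position. -/
theorem detPos_iterSub {A : Type*} (m n : ℕ) (σ : Subst A)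
    (h : ∃ i j : ℕ, i < m ∧ j < n ∧ DetPos σ i j) :
    ∀ k : ℕ, 1 ≤ k →
      ∃ i j : ℕ, i < m ^ k ∧ j < n ^ k ∧ DetPos (iterSub m n σ k) i j := by
  obtain ⟨i, j, hi, hj, hdet⟩ := h
  intro k hk
  induction k with
  | zero => omega
  | succ k ih =>
    rcases Nat.eq_zero_or_pos k with rfl | hk'
    · refine ⟨i, j, by simpa using hi, by simpa using hj, fun a b hab => ?_⟩
      apply hdet a b
      simpa [iterSub, compSub, Nat.mod_eq_of_lt hi, Nat.mod_eq_of_lt hj] using hab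
    · obtain ⟨i', j', hi', hj', hdet'⟩ := ih hk'
      refine ⟨i' * m + i, j' * n + j, ?_, ?_, fun a b hab => ?_⟩
      · calc i' * m + i < i' * m + m := by omega
          _ = (i' + 1) * m := by ring
          _ ≤ m ^ k * m := Nat.mul_le_mul_right m hi'
          _ = m ^ (k + 1) := by ring
      · calc j' * n + j < j' * n + n := by omega
          _ = (j' + 1) * n := by ring
          _ ≤ n ^ k * n := Nat.mul_le_mul_right n hj'
          _ = n ^ (k + 1) := by ring
      · have hm : 0 < m := by omega
        have hn : 0 < n := by omega
        have h1 : (i' * m + i) / m = i' := by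
          rw [Nat.mul_comm, Nat.mul_add_div (by omega), Nat.div_eq_of_lt hi, Nat.add_zero]
        have h2 : (i' * m + i) % m = i := by
          rw [Nat.mul_comm, Nat.mul_add_mod, Nat.mod_eq_of_lt hi]
        have h3 : (j' * n + j) / n = j' := by
          rw [Nat.mul_comm, Nat.mul_add_div (by omega), Nat.div_eq_of_lt hj, Nat.add_zero]
        have h4 : (j' * n + j) % n = j := by
          rw [Nat.mul_comm, Nat.mul_add_mod, Nat.mod_eq_of_lt hj]
        simp only [iterSub, compSub, h1, h2, h3, h4] at hab
        exact hdet' a b (hdet _ _ hab)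
end

section
/- For all positive integers m and n, there exists an aperiodic subshift of finite type X ⊆ {0,1}^(ℤ²) such that every configuration c ∈ X has exactly mn + 1 distinct m×n rectangular patterns. -/
/-- A configuration: a coloring of `ℤ²` by the alphabet `A`. -/
abbrev Config (A : Type*) := ℤ × ℤ → A

/-- Shift of a configuration by the vector `u`. -/
def shiftC {A : Type*} (u : ℤ × ℤ) (c : Config A) : Config A :=
  fun v => c (v - u)

/-- `X` is a subshift of finite type: it is defined by constraining, at every
position, the contents of a fixed finite window `D` to a set `P` of allowed
window patterns. -/
def IsSFT {A : Type*} (X : Set (Config A)) : Prop :=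
  ∃ (D : Finset (ℤ × ℤ)) (P : Set (D → A)),
    X = {c | ∀ u : ℤ × ℤ, (fun v : D => c (u + (v : ℤ × ℤ))) ∈ P}

/-- `X` is aperiodic: nonempty and containing no periodic configuration. -/
def Aperiodic {A : Type*} (X : Set (Config A)) : Prop :=
  X.Nonempty ∧ ∀ c ∈ X, ∀ u : ℤ × ℤ, u ≠ 0 → shiftC u c ≠ c

/-- The set `L_{m,n}(c)` of `m × n` rectangular patterns appearing in `c`. -/
def langRect {A : Type*} (m n : ℕ) (c : Config A) : Set (Fin m × Fin n → A) :=
  {p | ∃ u : ℤ × ℤ, ∀ (i : Fin m) (j : Fin n),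
    p (i, j) = c (u.1 + (i : ℤ), u.2 + (j : ℤ))}

namespace SFTAux

lemma exists_shift (M t : ℤ) (hM : 0 < M) :
    ∃ p : ℤ, 0 ≤ M * p - t ∧ M * p - t < M := by
  refine ⟨-((-t) / M), ?_⟩
  have h1 := Int.emod_nonneg (-t) hM.ne'
  have h2 := Int.emod_lt_of_pos (-t) hM
  have h3 := Int.mul_ediv_add_emod (-t) M
  have h4 : M * -((-t) / M) = -(M * ((-t) / M)) := by ring
  constructor <;> [linarith; linarith]

lemma unit_zero {M t : ℤ} (hM : 0 < M) (h1 : -M < M * t) (h2 : M * t < M) : t = 0 := by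
  rcases lt_trichotomy t 0 with h | h | h
  · have : M * t ≤ M * (-1) := mul_le_mul_of_nonneg_left (by omega) hM.le
    linarith
  · exact h
  · have : M * 1 ≤ M * t := mul_le_mul_of_nonneg_left (by omega) hM.le
    linarith

lemma bound_of_mul {M γ K : ℤ} (hM : 0 < M) (h1 : 0 ≤ M * γ) (h2 : M * γ < M * K) :
    0 ≤ γ ∧ γ < K := by
  constructor
  · by_contra h
    have : M * γ < 0 := mul_neg_of_pos_of_neg hM (by omega)
    linarith
  · exact lt_of_mul_lt_mul_left h2 hM.le

variable {A : Type} [Fintype A]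

noncomputable def idx (a : A) : ℕ := Fintype.equivFin A a

lemma idx_inj {a b : A} (h : idx a = idx b) : a = b := by
  have := (Fintype.equivFin A).injective (Fin.ext h)
  exact this

lemma idx_lt (a : A) : idx a < Fintype.card A := (Fintype.equivFin A a).isLt

def Kc (A : Type) [Fintype A] : ℤ := 2 * Fintype.card A + 4

lemma Kc_pos : 0 < Kc A := by unfold Kc; positivity

lemma Kc_ge : 4 ≤ Kc A := by
  unfold Kc
  have : (0:ℤ) ≤ (Fintype.card A : ℤ) := by positivity
  omega

noncomputable def Eblk (a : A) (v : ℤ × ℤ) : Bool :=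
  decide ((v.2 = 0 ∧ (v.1 = 0 ∨ v.1 = 1)) ∨ (v.2 = 2 ∧ v.1 = 2 * idx a + 2))

lemma Eblk_true_iff (a : A) (v : ℤ × ℤ) :
    Eblk a v = true ↔ ((v.2 = 0 ∧ (v.1 = 0 ∨ v.1 = 1)) ∨ (v.2 = 2 ∧ v.1 = 2 * idx a + 2)) := by
  simp [Eblk]

noncomputable def Zc (y : Config A) (z : ℤ × ℤ) : Bool :=
  Eblk (y (z.1 / Kc A, z.2 / Kc A)) (z.1 % Kc A, z.2 % Kc A)

lemma Zc_apply (y : Config A) (p q i j : ℤ) (hi0 : 0 ≤ i) (hi : i < Kc A)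
    (hj0 : 0 ≤ j) (hj : j < Kc A) :
    Zc y (Kc A * p + i, Kc A * q + j) = Eblk (y (p, q)) (i, j) := by
  have hK := Kc_pos (A := A)
  have e1 : (Kc A * p + i) / Kc A = p := by
    rw [add_comm, Int.add_mul_ediv_left _ _ hK.ne', Int.ediv_eq_zero_of_lt hi0 hi, zero_add]
  have e2 : (Kc A * q + j) / Kc A = q := by
    rw [add_comm, Int.add_mul_ediv_left _ _ hK.ne', Int.ediv_eq_zero_of_lt hj0 hj, zero_add]
  have e3 : (Kc A * p + i) % Kc A = i := by
    rw [add_comm, Int.add_mul_emod_self_left, Int.emod_eq_of_lt hi0 hi]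
  have e4 : (Kc A * q + j) % Kc A = j := by
    rw [add_comm, Int.add_mul_emod_self_left, Int.emod_eq_of_lt hj0 hj]
  unfold Zc
  rw [e1, e2, e3, e4]

lemma Zc_shift (y : Config A) (p q : ℤ) (z : ℤ × ℤ) :
    Zc y (Kc A * p + z.1, Kc A * q + z.2) = Zc (fun r => y ((p, q) + r)) z := by
  have hK := Kc_pos (A := A)
  have e1 : (Kc A * p + z.1) / Kc A = p + z.1 / Kc A := by
    rw [add_comm, Int.add_mul_ediv_left _ _ hK.ne', add_comm]
  have e2 : (Kc A * q + z.2) / Kc A = q + z.2 / Kc A := by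
    rw [add_comm, Int.add_mul_ediv_left _ _ hK.ne', add_comm]
  have e3 : (Kc A * p + z.1) % Kc A = z.1 % Kc A := by
    rw [add_comm, Int.add_mul_emod_self_left]
  have e4 : (Kc A * q + z.2) % Kc A = z.2 % Kc A := by
    rw [add_comm, Int.add_mul_emod_self_left]
  unfold Zc
  rw [e1, e2, e3, e4]
  rfl

lemma Zc_domino_of (y : Config A) (p q : ℤ) :
    Zc y (Kc A * p, Kc A * q) = true ∧ Zc y (Kc A * p + 1, Kc A * q) = true := by
  have hK := Kc_ge (A := A)
  constructor
  · have : (Kc A * p, Kc A * q) = (Kc A * p + 0, Kc A * q + 0) := by simp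
    rw [this, Zc_apply y p q 0 0 le_rfl (by omega) le_rfl (by omega), Eblk_true_iff]
    left; exact ⟨rfl, Or.inl rfl⟩
  · have : (Kc A * p + 1, Kc A * q) = (Kc A * p + 1, Kc A * q + 0) := by simp
    rw [this, Zc_apply y p q 1 0 (by omega) (by omega) le_rfl (by omega), Eblk_true_iff]
    left; exact ⟨rfl, Or.inr rfl⟩

lemma Zc_domino_iff (y : Config A) (z : ℤ × ℤ) (h1 : Zc y z = true)
    (h2 : Zc y (z.1 + 1, z.2) = true) : Kc A ∣ z.1 ∧ Kc A ∣ z.2 := by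
  have hK := Kc_ge (A := A)
  have hK0 := Kc_pos (A := A)
  have key : ∀ x : ℤ, x % Kc A < Kc A - 1 → (x + 1) % Kc A = x % Kc A + 1 := by
    intro x hx
    have h0 := Int.emod_nonneg x hK0.ne'
    have e1 : (1:ℤ) % Kc A = 1 := Int.emod_eq_of_lt (by omega) (by omega)
    calc (x + 1) % Kc A = (x % Kc A + 1 % Kc A) % Kc A := Int.add_emod x 1 (Kc A)
      _ = (x % Kc A + 1) % Kc A := by rw [e1]
      _ = x % Kc A + 1 := Int.emod_eq_of_lt (by omega) (by omega)
  unfold Zc at h1 h2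
  rw [Eblk_true_iff] at h1 h2
  simp only at h1 h2
  have hb1 := Int.emod_nonneg z.1 hK0.ne'
  have hb2 := Int.emod_lt_of_pos z.1 hK0
  have hidx1 : (idx (y ((z.1 + 1) / Kc A, z.2 / Kc A)) : ℤ) < Fintype.card A := by
    exact_mod_cast idx_lt _
  have hidx2 : (idx (y (z.1 / Kc A, z.2 / Kc A)) : ℤ) < Fintype.card A := by
    exact_mod_cast idx_lt _
  have hKdef : Kc A = 2 * Fintype.card A + 4 := rfl
  rcases h1 with ⟨hj, hi⟩ | ⟨hj, hi⟩
  · -- row 0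
    rcases h2 with ⟨-, hi2⟩ | ⟨hj2, -⟩
    · rcases hi with hi | hi
      · exact ⟨Int.dvd_of_emod_eq_zero hi, Int.dvd_of_emod_eq_zero hj⟩
      · have := key z.1 (by omega)
        omega
    · omega
  · -- row 2
    rcases h2 with ⟨hj2, -⟩ | ⟨-, hi2⟩
    · omega
    · have := key z.1 (by omega)
      omega


noncomputable def Psi (m n : ℤ) (y : Config A) (u : ℤ × ℤ) : Config Bool :=
  fun v => if m ∣ (v.1 - u.1) ∧ n ∣ (v.2 - u.2)
    then Zc y ((v.1 - u.1) / m, (v.2 - u.2) / n) else false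

variable {m n : ℤ}

lemma Psi_on (hm : 0 < m) (hn : 0 < n) (y : Config A) (u : ℤ × ℤ) (α β : ℤ) :
    Psi m n y u (u.1 + m * α, u.2 + n * β) = Zc y (α, β) := by
  unfold Psi
  have e1 : u.1 + m * α - u.1 = m * α := by ring
  have e2 : u.2 + n * β - u.2 = n * β := by ring
  simp only [e1, e2]
  rw [if_pos ⟨dvd_mul_right m α, dvd_mul_right n β⟩,
    Int.mul_ediv_cancel_left _ hm.ne', Int.mul_ediv_cancel_left _ hn.ne']

lemma Psi_off (y : Config A) (u v : ℤ × ℤ)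
    (h : ¬(m ∣ (v.1 - u.1) ∧ n ∣ (v.2 - u.2))) : Psi m n y u v = false := if_neg h

lemma Psi_true (y : Config A) (u v : ℤ × ℤ) (h : Psi m n y u v = true) :
    ∃ α β : ℤ, v.1 = u.1 + m * α ∧ v.2 = u.2 + n * β := by
  by_cases hd : (m ∣ (v.1 - u.1) ∧ n ∣ (v.2 - u.2))
  · obtain ⟨⟨α, hα⟩, ⟨β, hβ⟩⟩ := hd
    exact ⟨α, β, by linarith, by linarith⟩
  · rw [Psi_off y u v hd] at h
    exact absurd h (by simp)

def Xset (m n : ℤ) (Y : Set (Config A)) : Set (Config Bool) :=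
  {c | ∃ y ∈ Y, ∃ u : ℤ × ℤ, c = Psi m n y u}


lemma Eblk_two (a : A) : Eblk a ((2:ℤ), (0:ℤ)) = false := by
  simp [Eblk]

lemma complexity (m n : ℕ) (hm : 0 < m) (hn : 0 < n) (Y : Set (Config A))
    (c : Config Bool) (hc : c ∈ Xset (m : ℤ) (n : ℤ) Y) :
    (langRect m n c).ncard = m * n + 1 := by
  obtain ⟨y, hy, u, rfl⟩ := hc
  have hM : (0:ℤ) < m := by exact_mod_cast hm
  have hN : (0:ℤ) < n := by exact_mod_cast hn
  have hK := Kc_ge (A := A)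
  set sing : Fin m × Fin n → (Fin m × Fin n → Bool) :=
    fun ij => fun kl => decide (kl = ij) with hsing
  have hz00 : Zc y ((0:ℤ), (0:ℤ)) = true := by
    have e2 : ((0:ℤ), (0:ℤ)) = (Kc A * 0 + 0, Kc A * 0 + 0) := by simp
    rw [e2, Zc_apply y 0 0 0 0 le_rfl (by omega) le_rfl (by omega), Eblk_true_iff]
    left; exact ⟨rfl, Or.inl rfl⟩
  have hcu : Psi (m:ℤ) (n:ℤ) y u u = true := by
    have h := Psi_on hM hN y u 0 0
    rw [show (u.1 + (m:ℤ) * 0, u.2 + (n:ℤ) * 0) = u by simp] at h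
    rw [h]; exact hz00
  have hc2 : Psi (m:ℤ) (n:ℤ) y u (u.1 + (m:ℤ) * 2, u.2 + (n:ℤ) * 0) = false := by
    rw [Psi_on hM hN]
    have e2 : ((2:ℤ), (0:ℤ)) = (Kc A * 0 + 2, Kc A * 0 + 0) := by simp
    rw [e2, Zc_apply y 0 0 2 0 (by omega) (by omega) le_rfl (by omega)]
    exact Eblk_two _
  have key : langRect m n (Psi (m:ℤ) (n:ℤ) y u) =
      insert (fun _ => false) (Set.range sing) := by
    ext p
    constructor
    · rintro ⟨w, hw⟩
      set i0 : ℤ := (u.1 - w.1) % m with hi0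
      set j0 : ℤ := (u.2 - w.2) % n with hj0
      have hi0a : 0 ≤ i0 := Int.emod_nonneg _ hM.ne'
      have hi0b : i0 < m := Int.emod_lt_of_pos _ hM
      have hj0a : 0 ≤ j0 := Int.emod_nonneg _ hN.ne'
      have hj0b : j0 < n := Int.emod_lt_of_pos _ hN
      have uniq : ∀ (i : Fin m) (j : Fin n),
          Psi (m:ℤ) (n:ℤ) y u (w.1 + (i:ℤ), w.2 + (j:ℤ)) = true →
            (i:ℤ) = i0 ∧ (j:ℤ) = j0 := by
        intro i j h
        obtain ⟨α, β, h1, h2⟩ := Psi_true _ _ _ h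
        dsimp only at h1 h2
        have a1 : ((m:ℤ)) * (-α) = -((m:ℤ) * α) := by ring
        have a2 : ((n:ℤ)) * (-β) = -((n:ℤ) * β) := by ring
        have e1 : u.1 - w.1 = (i:ℤ) + (m:ℤ) * (-α) := by linarith
        have e2 : u.2 - w.2 = (j:ℤ) + (n:ℤ) * (-β) := by linarith
        have b1 : (i:ℤ) < m := by exact_mod_cast i.isLt
        have b2 : (j:ℤ) < n := by exact_mod_cast j.isLt
        constructor
        · rw [hi0, e1, Int.add_mul_emod_self_left,
            Int.emod_eq_of_lt (by positivity) b1]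
        · rw [hj0, e2, Int.add_mul_emod_self_left,
            Int.emod_eq_of_lt (by positivity) b2]
      by_cases hval : Psi (m:ℤ) (n:ℤ) y u (w.1 + i0, w.2 + j0) = true
      · refine Set.mem_insert_iff.mpr (Or.inr ⟨(⟨i0.toNat, by omega⟩, ⟨j0.toNat, by omega⟩), ?_⟩)
        funext kl
        obtain ⟨i, j⟩ := kl
        rw [hw i j]
        cases hb : Psi (m:ℤ) (n:ℤ) y u (w.1 + (i:ℤ), w.2 + (j:ℤ)) with
        | true =>
          obtain ⟨e1, e2⟩ := uniq i j hb
          show decide _ = true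
          rw [decide_eq_true_eq]
          simp only [Prod.mk.injEq]
          constructor
          · apply Fin.ext
            show (i : ℕ) = i0.toNat
            omega
          · apply Fin.ext
            show (j : ℕ) = j0.toNat
            omega
        | false =>
          show decide _ = false
          rw [decide_eq_false_iff_not]
          intro heq
          simp only [Prod.mk.injEq] at heq
          have e1 : (i:ℤ) = i0 := by
            have := congrArg Fin.val heq.1
            simp at this; omega
          have e2 : (j:ℤ) = j0 := by
            have := congrArg Fin.val heq.2
            simp at this; omega
          rw [e1, e2, hval] at hb
          exact Bool.noConfusion hb
      · refine Set.mem_insert_iff.mpr (Or.inl ?_)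
        funext kl
        obtain ⟨i, j⟩ := kl
        rw [hw i j]
        cases hb : Psi (m:ℤ) (n:ℤ) y u (w.1 + (i:ℤ), w.2 + (j:ℤ)) with
        | true =>
          obtain ⟨e1, e2⟩ := uniq i j hb
          rw [e1, e2] at hb
          exact absurd hb hval
        | false => rfl
    · intro hp
      rcases Set.mem_insert_iff.mp hp with hp | ⟨⟨i, j⟩, hij⟩
      · refine ⟨(u.1 + (m:ℤ) * 2, u.2 + (n:ℤ) * 0), ?_⟩
        intro i' j'
        rw [hp]
        cases hb : Psi (m:ℤ) (n:ℤ) y u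
            ((u.1 + (m:ℤ) * 2, u.2 + (n:ℤ) * 0).1 + (i':ℤ),
             (u.1 + (m:ℤ) * 2, u.2 + (n:ℤ) * 0).2 + (j':ℤ)) with
        | false => rfl
        | true =>
          exfalso
          obtain ⟨α, β, h1, h2⟩ := Psi_true _ _ _ hb
          dsimp only at h1 h2
          have b1 : (0:ℤ) ≤ (i':ℤ) := by positivity
          have b2 : (i':ℤ) < m := by exact_mod_cast i'.isLt
          have b3 : (0:ℤ) ≤ (j':ℤ) := by positivity
          have b4 : (j':ℤ) < n := by exact_mod_cast j'.isLt
          have e1 : (i':ℤ) = (m:ℤ) * (α - 2) := by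
            have : ((m:ℤ)) * (α - 2) = (m:ℤ) * α - (m:ℤ) * 2 := by ring
            linarith
          have e2 : (j':ℤ) = (n:ℤ) * (β - 0) := by
            have : ((n:ℤ)) * (β - 0) = (n:ℤ) * β - (n:ℤ) * 0 := by ring
            linarith
          have z1 : α - 2 = 0 := unit_zero hM (by linarith) (by linarith)
          have z2 : β - 0 = 0 := unit_zero hN (by linarith) (by linarith)
          have e3 : (i':ℤ) = 0 := by rw [e1, z1, mul_zero]
          have e4 : (j':ℤ) = 0 := by rw [e2, z2, mul_zero]
          rw [show ((u.1 + (m:ℤ) * 2, u.2 + (n:ℤ) * 0).1 + (i':ℤ),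
             (u.1 + (m:ℤ) * 2, u.2 + (n:ℤ) * 0).2 + (j':ℤ))
             = (u.1 + (m:ℤ) * 2, u.2 + (n:ℤ) * 0) by
               rw [e3, e4]; simp, hc2] at hb
          exact Bool.noConfusion hb
      · refine ⟨(u.1 - (i:ℤ), u.2 - (j:ℤ)), ?_⟩
        intro i' j'
        rw [← hij]
        dsimp only
        cases hb : Psi (m:ℤ) (n:ℤ) y u (u.1 - (i:ℤ) + (i':ℤ), u.2 - (j:ℤ) + (j':ℤ)) with
        | true =>
          obtain ⟨α, β, h1, h2⟩ := Psi_true _ _ _ hb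
          dsimp only at h1 h2
          have e1 : (i':ℤ) - (i:ℤ) = (m:ℤ) * α := by linarith
          have e2 : (j':ℤ) - (j:ℤ) = (n:ℤ) * β := by linarith
          have b1 : (i':ℤ) < m := by exact_mod_cast i'.isLt
          have b2 : (i:ℤ) < m := by exact_mod_cast i.isLt
          have b3 : (j':ℤ) < n := by exact_mod_cast j'.isLt
          have b4 : (j:ℤ) < n := by exact_mod_cast j.isLt
          have c1 : (0:ℤ) ≤ (i:ℤ) := by positivity
          have c2 : (0:ℤ) ≤ (i':ℤ) := by positivity
          have c3 : (0:ℤ) ≤ (j:ℤ) := by positivity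
          have c4 : (0:ℤ) ≤ (j':ℤ) := by positivity
          have z1 : α = 0 := unit_zero hM (by linarith) (by linarith)
          have z2 : β = 0 := unit_zero hN (by linarith) (by linarith)
          rw [z1, mul_zero] at e1
          rw [z2, mul_zero] at e2
          have hii : i' = i := Fin.ext (by omega)
          have hjj : j' = j := Fin.ext (by omega)
          subst hii; subst hjj
          simp [hsing]
        | false =>
          show decide _ = false
          rw [decide_eq_false_iff_not]
          intro heq
          rw [Prod.mk.injEq] at heq
          obtain ⟨hi', hj'⟩ := heq
          subst hi'; subst hj'
          have e : ((u.1 - (i':ℤ) + (i':ℤ), u.2 - (j':ℤ) + (j':ℤ)) : ℤ × ℤ) = u := by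
            have : ((u.1 - (i':ℤ) + (i':ℤ), u.2 - (j':ℤ) + (j':ℤ)) : ℤ × ℤ)
                = (u.1, u.2) := by
              rw [Prod.mk.injEq]; constructor <;> ring
            exact this
          rw [e, hcu] at hb
          exact Bool.noConfusion hb
  rw [key]
  have hnotmem : (fun _ => false) ∉ Set.range sing := by
    rintro ⟨ij, hij⟩
    have := congrFun hij ij
    simp [hsing] at this
  have hinj : Function.Injective sing := by
    intro a b hab
    have h := congrFun hab a
    simp [hsing] at h
    first
    | exact h
    | exact h.symm
  rw [Set.ncard_insert_of_notMem hnotmem (Set.finite_range _), ← Nat.card_coe_set_eq,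
    Nat.card_range_of_injective hinj]
  simp [Nat.card_eq_fintype_card]


lemma aperiodic_X (hm : 0 < m) (hn : 0 < n) (Y : Set (Config A)) (hap : Aperiodic Y) :
    Aperiodic (Xset m n Y) := by
  constructor
  · obtain ⟨y0, hy0⟩ := hap.1
    exact ⟨Psi m n y0 0, y0, hy0, 0, rfl⟩
  · rintro c ⟨y, hy, u, rfl⟩ w hw0 hcon
    have hsh : ∀ v, Psi m n y u (v - w) = Psi m n y u v := fun v => congrFun hcon v
    have hz00 : Zc y ((0:ℤ), (0:ℤ)) = true := by
      have := (Zc_domino_of y 0 0).1; simpa using this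
    have hz10 : Zc y ((1:ℤ), (0:ℤ)) = true := by
      have := (Zc_domino_of y 0 0).2; simpa using this
    have hcu : Psi m n y u u = true := by
      have h := Psi_on hm hn y u 0 0
      rw [show (u.1 + m * 0, u.2 + n * 0) = u by simp] at h
      rw [h]; exact hz00
    have hcw : Psi m n y u (u + w) = true := by
      have h := hsh (u + w)
      rw [add_sub_cancel_right] at h
      rw [← h]; exact hcu
    obtain ⟨α, β, hα, hβ⟩ := Psi_true _ _ _ hcw
    rw [Prod.fst_add] at hα
    rw [Prod.snd_add] at hβ
    have hw1 : w.1 = m * α := by linarith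
    have hw2 : w.2 = n * β := by linarith
    have hz : ∀ γ δ : ℤ, Zc y (γ - α, δ - β) = Zc y (γ, δ) := by
      intro γ δ
      have h := hsh (u.1 + m * γ, u.2 + n * δ)
      have e : ((u.1 + m * γ, u.2 + n * δ) - w : ℤ × ℤ)
          = (u.1 + m * (γ - α), u.2 + n * (δ - β)) := by
        rw [show ((u.1 + m * γ, u.2 + n * δ) - w : ℤ × ℤ)
            = (u.1 + m * γ - w.1, u.2 + n * δ - w.2) from rfl, Prod.mk.injEq]
        constructor
        · rw [hw1]; ring
        · rw [hw2]; ring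
      rw [e, Psi_on hm hn, Psi_on hm hn] at h
      exact h
    have hm0 : Zc y ((0:ℤ) - α, (0:ℤ) - β) = true := by rw [hz]; exact hz00
    have hm1 : Zc y (((0:ℤ) - α, (0:ℤ) - β).1 + 1, ((0:ℤ) - α, (0:ℤ) - β).2) = true := by
      show Zc y ((0:ℤ) - α + 1, (0:ℤ) - β) = true
      rw [show (0:ℤ) - α + 1 = 1 - α by ring]
      rw [show ((1:ℤ) - α, (0:ℤ) - β) = ((1:ℤ) - α, (0:ℤ) - β) from rfl]
      have := hz 1 0
      rw [show (1:ℤ) - α = 1 - α from rfl] at this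
      rw [this]; exact hz10
    obtain ⟨hdα, hdβ⟩ := Zc_domino_iff y ((0:ℤ) - α, (0:ℤ) - β) hm0 hm1
    have hdα' : Kc A ∣ α := by
      rw [show (0:ℤ) - α = -α by ring] at hdα
      exact (Int.dvd_neg).mp hdα
    have hdβ' : Kc A ∣ β := by
      rw [show (0:ℤ) - β = -β by ring] at hdβ
      exact (Int.dvd_neg).mp hdβ
    obtain ⟨a', ha'⟩ := hdα'
    obtain ⟨b', hb'⟩ := hdβ'
    have hK := Kc_ge (A := A)
    have hper : ∀ P Q : ℤ, y (P - a', Q - b') = y (P, Q) := by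
      intro P Q
      have hidx : (idx (y (P, Q)) : ℤ) < Fintype.card A := by exact_mod_cast idx_lt _
      have hKd : Kc A = 2 * (Fintype.card A : ℤ) + 4 := rfl
      have h1 : Zc y (Kc A * P + (2 * (idx (y (P, Q)) : ℤ) + 2), Kc A * Q + 2) = true := by
        rw [Zc_apply y P Q _ _ (by positivity) (by omega) (by omega) (by omega), Eblk_true_iff]
        right; exact ⟨rfl, rfl⟩
      have h2 := hz (Kc A * P + (2 * (idx (y (P, Q)) : ℤ) + 2)) (Kc A * Q + 2)
      rw [h1] at h2
      have e : ((Kc A * P + (2 * (idx (y (P, Q)) : ℤ) + 2) - α, Kc A * Q + 2 - β) : ℤ × ℤ)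
          = (Kc A * (P - a') + (2 * (idx (y (P, Q)) : ℤ) + 2), Kc A * (Q - b') + 2) := by
        rw [Prod.mk.injEq]
        constructor
        · rw [ha']; ring
        · rw [hb']; ring
      rw [e] at h2
      rw [Zc_apply y _ _ _ _ (by positivity) (by omega) (by omega) (by omega),
        Eblk_true_iff] at h2
      rcases h2 with ⟨h3, -⟩ | ⟨-, h4⟩
      · omega
      · have : idx (y (P - a', Q - b')) = idx (y (P, Q)) := by omega
        exact idx_inj this
    have hy' : shiftC ((a' : ℤ), (b' : ℤ)) y = y := by
      funext v
      exact hper v.1 v.2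
    have hab : (((a' : ℤ), (b' : ℤ)) : ℤ × ℤ) ≠ 0 := by
      intro h
      apply hw0
      have h1 : a' = 0 := congrArg Prod.fst h
      have h2 : b' = 0 := congrArg Prod.snd h
      have e1 : w.1 = 0 := by rw [hw1, ha', h1]; ring
      have e2 : w.2 = 0 := by rw [hw2, hb', h2]; ring
      exact Prod.ext_iff.mpr ⟨e1, e2⟩
    exact hap.2 y hy ((a' : ℤ), (b' : ℤ)) hab hy'


set_option maxHeartbeats 2000000 in
lemma isSFT_X (hm : 0 < m) (hn : 0 < n) (DY : Finset (ℤ × ℤ)) (PY : Set (DY → A))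
    (Y : Set (Config A))
    (hY : Y = {c | ∀ u : ℤ × ℤ, (fun v : DY => c (u + (v : ℤ × ℤ))) ∈ PY}) :
    IsSFT (Xset m n Y) := by
  classical
  have hK := Kc_ge (A := A)
  have hK0 := Kc_pos (A := A)
  set rY : ℕ := DY.sup (fun v => v.1.natAbs ⊔ v.2.natAbs) with hrYdef
  have hrY : ∀ v ∈ DY, v.1.natAbs ≤ rY ∧ v.2.natAbs ≤ rY := by
    intro v hv
    have h := Finset.le_sup (f := fun v : ℤ × ℤ => v.1.natAbs ⊔ v.2.natAbs) hv
    exact ⟨le_trans le_sup_left h, le_trans le_sup_right h⟩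
  set W : ℤ := Kc A * (rY + 2) with hWdef
  have hrY0 : (0:ℤ) ≤ (rY:ℤ) := by positivity
  have hWK : Kc A + 1 ≤ W := by nlinarith
  have hWr : Kc A * ((rY:ℤ) + 1) ≤ W := by nlinarith
  have hW0 : 0 < W := by nlinarith
  set Dfin : Finset (ℤ × ℤ) :=
    Finset.Icc (-(m * W)) (m * W) ×ˢ Finset.Icc (-(n * W)) (n * W) with hDdef
  have memD : ∀ v : ℤ × ℤ, -(m * W) ≤ v.1 → v.1 ≤ m * W → -(n * W) ≤ v.2 →
      v.2 ≤ n * W → v ∈ Dfin := by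
    intro v h1 h2 h3 h4
    rw [hDdef, Finset.mem_product, Finset.mem_Icc, Finset.mem_Icc]
    exact ⟨⟨h1, h2⟩, ⟨h3, h4⟩⟩
  have memD' : ∀ γ δ : ℤ, -W ≤ γ → γ ≤ W → -W ≤ δ → δ ≤ W →
      ((m * γ, n * δ) : ℤ × ℤ) ∈ Dfin := by
    intro γ δ h1 h2 h3 h4
    apply memD <;> dsimp only
    · have h := mul_le_mul_of_nonneg_left h1 hm.le
      have e : m * (-W) = -(m * W) := by ring
      linarith
    · exact mul_le_mul_of_nonneg_left h2 hm.le
    · have h := mul_le_mul_of_nonneg_left h3 hn.le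
      have e : n * (-W) = -(n * W) := by ring
      linarith
    · exact mul_le_mul_of_nonneg_left h4 hn.le
  refine ⟨Dfin, {π | ∃ f : ℤ × ℤ → Bool, (∀ v : (Dfin : Finset (ℤ × ℤ)), π v = f (v : ℤ × ℤ)) ∧
    (∃ a b : ℤ, 0 ≤ a ∧ a < m * Kc A ∧ 0 ≤ b ∧ b < n * Kc A ∧
       f (a, b) = true ∧ f (a + m, b) = true) ∧
    (f (0, 0) = true → f ((m : ℤ), (0 : ℤ)) = true →
      ∃ y : Config A, (fun v : DY => y ((0 : ℤ × ℤ) + (v : ℤ × ℤ))) ∈ PY ∧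
        ∀ v ∈ Dfin, f v = Psi m n y 0 v)}, ?_⟩
  ext c
  simp only [Set.mem_setOf_eq]
  constructor
  · rintro ⟨y, hy, u₀, rfl⟩ u
    refine ⟨fun v => Psi m n y u₀ (u + v), fun v => rfl, ?_, ?_⟩
    · obtain ⟨p1, hp1a, hp1b⟩ := exists_shift (m * Kc A) (u.1 - u₀.1) (by positivity)
      obtain ⟨p2, hp2a, hp2b⟩ := exists_shift (n * Kc A) (u.2 - u₀.2) (by positivity)
      refine ⟨m * Kc A * p1 - (u.1 - u₀.1), n * Kc A * p2 - (u.2 - u₀.2),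
        hp1a, hp1b, hp2a, hp2b, ?_, ?_⟩
      · show Psi m n y u₀
          (u + (m * Kc A * p1 - (u.1 - u₀.1), n * Kc A * p2 - (u.2 - u₀.2))) = true
        have e : (u + (m * Kc A * p1 - (u.1 - u₀.1), n * Kc A * p2 - (u.2 - u₀.2)) : ℤ × ℤ)
            = (u₀.1 + m * (Kc A * p1), u₀.2 + n * (Kc A * p2)) := by
          rw [show (u + (m * Kc A * p1 - (u.1 - u₀.1), n * Kc A * p2 - (u.2 - u₀.2)) : ℤ × ℤ)
              = (u.1 + (m * Kc A * p1 - (u.1 - u₀.1)), u.2 + (n * Kc A * p2 - (u.2 - u₀.2)))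
              from rfl, Prod.mk.injEq]
          constructor <;> ring
        rw [e, Psi_on hm hn]
        exact (Zc_domino_of y p1 p2).1
      · show Psi m n y u₀
          (u + (m * Kc A * p1 - (u.1 - u₀.1) + m, n * Kc A * p2 - (u.2 - u₀.2))) = true
        have e : (u + (m * Kc A * p1 - (u.1 - u₀.1) + m, n * Kc A * p2 - (u.2 - u₀.2)) : ℤ × ℤ)
            = (u₀.1 + m * (Kc A * p1 + 1), u₀.2 + n * (Kc A * p2)) := by
          rw [show (u + (m * Kc A * p1 - (u.1 - u₀.1) + m, n * Kc A * p2 - (u.2 - u₀.2)) : ℤ × ℤ)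
              = (u.1 + (m * Kc A * p1 - (u.1 - u₀.1) + m), u.2 + (n * Kc A * p2 - (u.2 - u₀.2)))
              from rfl, Prod.mk.injEq]
          constructor <;> ring
        rw [e, Psi_on hm hn]
        exact (Zc_domino_of y p1 p2).2
    · intro h0 hm0
      replace h0 : Psi m n y u₀ (u + ((0:ℤ), (0:ℤ))) = true := h0
      replace hm0 : Psi m n y u₀ (u + (m, (0:ℤ))) = true := hm0
      rw [show (u + ((0:ℤ), (0:ℤ)) : ℤ × ℤ) = u by simp] at h0
      obtain ⟨α, β, hα, hβ⟩ := Psi_true _ _ _ h0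
      have hz1 : Zc y (α, β) = true := by
        have e : u = (u₀.1 + m * α, u₀.2 + n * β) := Prod.ext_iff.mpr ⟨hα, hβ⟩
        rw [e, Psi_on hm hn] at h0; exact h0
      have hz2 : Zc y (α + 1, β) = true := by
        have e : (u + ((m:ℤ), (0:ℤ)) : ℤ × ℤ) = (u₀.1 + m * (α + 1), u₀.2 + n * β) := by
          rw [show (u + ((m:ℤ), (0:ℤ)) : ℤ × ℤ) = (u.1 + m, u.2 + 0) from rfl, Prod.mk.injEq]
          constructor
          · rw [hα]; ring
          · rw [hβ]; ring
        rw [e, Psi_on hm hn] at hm0; exact hm0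
      obtain ⟨hdα, hdβ⟩ := Zc_domino_iff y (α, β) hz1 hz2
      obtain ⟨p, hp⟩ := hdα
      obtain ⟨q, hq⟩ := hdβ
      dsimp only at hp hq
      have hy' := hy
      rw [hY] at hy'
      refine ⟨fun r => y ((p, q) + r), by simpa using hy' (p, q), ?_⟩
      intro v hv
      show Psi m n y u₀ (u + v) = Psi m n (fun r => y ((p, q) + r)) 0 v
      by_cases hdv : m ∣ v.1 ∧ n ∣ v.2
      · obtain ⟨⟨γ, hγ⟩, ⟨δ, hδ⟩⟩ := hdv
        have e1 : (u + v : ℤ × ℤ) = (u₀.1 + m * (Kc A * p + γ), u₀.2 + n * (Kc A * q + δ)) := by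
          rw [show (u + v : ℤ × ℤ) = (u.1 + v.1, u.2 + v.2) from rfl, Prod.mk.injEq]
          constructor
          · rw [hα, hγ, hp]; ring
          · rw [hβ, hδ, hq]; ring
        have e2 : v = (((0:ℤ×ℤ)).1 + m * γ, ((0:ℤ×ℤ)).2 + n * δ) := by
          refine Prod.ext_iff.mpr ⟨?_, ?_⟩
          · simpa using hγ
          · simpa using hδ
        rw [e1, Psi_on hm hn, e2, Psi_on hm hn]
        exact Zc_shift y p q (γ, δ)
      · have hR : ¬(m ∣ (v.1 - (0:ℤ×ℤ).1) ∧ n ∣ (v.2 - (0:ℤ×ℤ).2)) := by simpa using hdv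
        have hL : ¬(m ∣ ((u + v : ℤ×ℤ).1 - u₀.1) ∧ n ∣ ((u + v : ℤ×ℤ).2 - u₀.2)) := by
          intro hcon
          apply hdv
          obtain ⟨hc1, hc2⟩ := hcon
          constructor
          · have e : (u + v : ℤ × ℤ).1 - u₀.1 = m * α + v.1 := by
              rw [Prod.fst_add, hα]; ring
            rw [e] at hc1
            exact (dvd_add_right (dvd_mul_right _ _)).mp hc1
          · have e : (u + v : ℤ × ℤ).2 - u₀.2 = n * β + v.2 := by
              rw [Prod.snd_add, hβ]; ring
            rw [e] at hc2
            exact (dvd_add_right (dvd_mul_right _ _)).mp hc2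
        rw [Psi_off _ _ _ hL, Psi_off _ _ _ hR]
  · intro hc
    have C1 : ∀ u : ℤ × ℤ, ∃ a b : ℤ, 0 ≤ a ∧ a < m * Kc A ∧ 0 ≤ b ∧ b < n * Kc A ∧
        c (u.1 + a, u.2 + b) = true ∧ c (u.1 + a + m, u.2 + b) = true := by
      intro u
      obtain ⟨f, hf, ⟨a, b, h1, h2, h3, h4, h5, h6⟩, -⟩ := hc u
      have hmW : 0 < m * W := mul_pos hm hW0
      have hnW : 0 < n * W := mul_pos hn hW0
      have hKW : m * Kc A ≤ m * W := mul_le_mul_of_nonneg_left (by linarith) hm.le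
      have hKW2 : m * (Kc A + 1) ≤ m * W := mul_le_mul_of_nonneg_left hWK hm.le
      have eKW : m * (Kc A + 1) = m * Kc A + m * 1 := by ring
      have hNW : n * Kc A ≤ n * W := mul_le_mul_of_nonneg_left (by linarith) hn.le
      have mema : ((a, b) : ℤ × ℤ) ∈ Dfin := by
        apply memD <;> dsimp only <;> linarith
      have memb : ((a + m, b) : ℤ × ℤ) ∈ Dfin := by
        apply memD <;> dsimp only <;> linarith
      have e5 := hf ⟨(a, b), mema⟩
      have e6 := hf ⟨(a + m, b), memb⟩
      refine ⟨a, b, h1, h2, h3, h4, ?_, ?_⟩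
      · show c (u + ((a : ℤ), b)) = true
        exact e5.trans h5
      · have e : (u + ((a + m : ℤ), b) : ℤ × ℤ) = (u.1 + a + m, u.2 + b) := by
          rw [show (u + ((a + m : ℤ), b) : ℤ × ℤ) = (u.1 + (a + m), u.2 + b) from rfl,
            Prod.mk.injEq]
          exact ⟨by ring, rfl⟩
        rw [← e]
        exact e6.trans h6
    have C2 : ∀ u : ℤ × ℤ, c u = true → c (u.1 + m, u.2) = true →
        ∃ y : Config A, (fun v : DY => y ((0 : ℤ × ℤ) + (v : ℤ × ℤ))) ∈ PY ∧
          ∀ v ∈ Dfin, c (u + v) = Psi m n y 0 v := by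
      intro u h1 h2
      obtain ⟨f, hf, -, hC2⟩ := hc u
      have hmW : 0 < m * W := mul_pos hm hW0
      have hnW : 0 < n * W := mul_pos hn hW0
      have hmoW : m * 1 ≤ m * W := mul_le_mul_of_nonneg_left (by linarith) hm.le
      have mem0 : (((0:ℤ), (0:ℤ)) : ℤ × ℤ) ∈ Dfin := by
        apply memD <;> dsimp only <;> linarith
      have memm : ((m, (0:ℤ)) : ℤ × ℤ) ∈ Dfin := by
        apply memD <;> dsimp only <;> linarith
      have h1' : f (0, 0) = true := by
        have e := hf ⟨((0:ℤ), (0:ℤ)), mem0⟩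
        have e0 : (u + ((0:ℤ), (0:ℤ)) : ℤ × ℤ) = u := by simp
        rw [e0] at e
        rw [← e]; exact h1
      have h2' : f (m, 0) = true := by
        have e := hf ⟨((m:ℤ), (0:ℤ)), memm⟩
        have e0 : (u + ((m:ℤ), (0:ℤ)) : ℤ × ℤ) = (u.1 + m, u.2) := by
          rw [show (u + ((m:ℤ), (0:ℤ)) : ℤ × ℤ) = (u.1 + m, u.2 + 0) from rfl, Prod.mk.injEq]
          exact ⟨rfl, add_zero _⟩
        rw [e0] at e
        rw [← e]; exact h2
      obtain ⟨y, hyP, hrep⟩ := hC2 h1' h2'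
      refine ⟨y, hyP, fun v hv => ?_⟩
      exact (hf ⟨v, hv⟩).trans (hrep v hv)
    clear hc
    obtain ⟨a₀, b₀, -, -, -, -, hA, hB⟩ := C1 (0, 0)
    rw [show ((((0,0) : ℤ × ℤ)).1 + a₀, (((0,0) : ℤ × ℤ)).2 + b₀) = ((a₀, b₀) : ℤ × ℤ) by
      rw [Prod.mk.injEq]; exact ⟨zero_add _, zero_add _⟩] at hA
    rw [show ((((0,0) : ℤ × ℤ)).1 + a₀ + m, (((0,0) : ℤ × ℤ)).2 + b₀) = ((a₀ + m, b₀) : ℤ × ℤ) by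
      rw [Prod.mk.injEq]; exact ⟨by rw [zero_add], zero_add _⟩] at hB
    set Dom : ℤ × ℤ → Prop := fun P =>
      c (a₀ + m * (Kc A * P.1), b₀ + n * (Kc A * P.2)) = true ∧
      c (a₀ + m * (Kc A * P.1) + m, b₀ + n * (Kc A * P.2)) = true with hDom
    have hDom0 : Dom (0, 0) := by
      constructor
      · show c (a₀ + m * (Kc A * 0), b₀ + n * (Kc A * 0)) = true
        rw [show a₀ + m * (Kc A * 0) = a₀ by ring, show b₀ + n * (Kc A * 0) = b₀ by ring]
        exact hA
      · show c (a₀ + m * (Kc A * 0) + m, b₀ + n * (Kc A * 0)) = true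
        rw [show a₀ + m * (Kc A * 0) + m = a₀ + m by ring, show b₀ + n * (Kc A * 0) = b₀ by ring]
        exact hB
    have hvalgen : ∀ P : ℤ × ℤ, Dom P → ∃ y : Config A,
        (fun v : DY => y ((0 : ℤ × ℤ) + (v : ℤ × ℤ))) ∈ PY ∧
        ∀ v ∈ Dfin, c ((a₀ + m * (Kc A * P.1), b₀ + n * (Kc A * P.2)) + v) = Psi m n y 0 v :=
      fun P hP => C2 (a₀ + m * (Kc A * P.1), b₀ + n * (Kc A * P.2)) hP.1 hP.2
    have hvalM : ∀ (P : ℤ × ℤ) (y : Config A),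
        (∀ v ∈ Dfin, c ((a₀ + m * (Kc A * P.1), b₀ + n * (Kc A * P.2)) + v) = Psi m n y 0 v) →
        ∀ γ δ : ℤ, -W ≤ γ → γ ≤ W → -W ≤ δ → δ ≤ W →
        c (a₀ + m * (Kc A * P.1) + m * γ, b₀ + n * (Kc A * P.2) + n * δ) = Zc y (γ, δ) := by
      intro P y hrep γ δ h1 h2 h3 h4
      have h := hrep (m * γ, n * δ) (memD' γ δ h1 h2 h3 h4)
      have e2 : ((m * γ, n * δ) : ℤ × ℤ) = (((0:ℤ×ℤ)).1 + m * γ, ((0:ℤ×ℤ)).2 + n * δ) := by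
        rw [Prod.mk.injEq]; exact ⟨(zero_add _).symm, (zero_add _).symm⟩
      have hPsi : Psi m n y 0 ((m * γ : ℤ), (n * δ : ℤ)) = Zc y (γ, δ) := by
        conv_lhs => rw [e2]
        exact Psi_on hm hn y 0 γ δ
      exact h.trans hPsi
    have hKW : Kc A ≤ W := by linarith
    have hstep : ∀ P1 P2 : ℤ, Dom (P1, P2) →
        Dom (P1 + 1, P2) ∧ Dom (P1 - 1, P2) ∧ Dom (P1, P2 + 1) ∧ Dom (P1, P2 - 1) := by
      intro P1 P2 hP
      obtain ⟨y, -, hrep⟩ := hvalgen (P1, P2) hP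
      have hv := hvalM (P1, P2) y hrep
      have d10 := Zc_domino_of y 1 0
      have dm0 := Zc_domino_of y (-1) 0
      have d01 := Zc_domino_of y 0 1
      have d0m := Zc_domino_of y 0 (-1)
      rw [show ((Kc A * 1, Kc A * 0) : ℤ×ℤ) = ((Kc A, (0:ℤ)) : ℤ×ℤ) by
        rw [Prod.mk.injEq]; exact ⟨mul_one _, mul_zero _⟩,
        show ((Kc A * 1 + 1, Kc A * 0) : ℤ×ℤ) = ((Kc A + 1, (0:ℤ)) : ℤ×ℤ) by
        rw [Prod.mk.injEq]; exact ⟨by ring, mul_zero _⟩] at d10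
      rw [show ((Kc A * (-1), Kc A * 0) : ℤ×ℤ) = ((-Kc A, (0:ℤ)) : ℤ×ℤ) by
        rw [Prod.mk.injEq]; exact ⟨by ring, mul_zero _⟩,
        show ((Kc A * (-1) + 1, Kc A * 0) : ℤ×ℤ) = ((1 - Kc A, (0:ℤ)) : ℤ×ℤ) by
        rw [Prod.mk.injEq]; exact ⟨by ring, mul_zero _⟩] at dm0
      rw [show ((Kc A * 0, Kc A * 1) : ℤ×ℤ) = (((0:ℤ), Kc A) : ℤ×ℤ) by
        rw [Prod.mk.injEq]; exact ⟨mul_zero _, mul_one _⟩,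
        show ((Kc A * 0 + 1, Kc A * 1) : ℤ×ℤ) = (((1:ℤ), Kc A) : ℤ×ℤ) by
        rw [Prod.mk.injEq]; exact ⟨by ring, mul_one _⟩] at d01
      rw [show ((Kc A * 0, Kc A * (-1)) : ℤ×ℤ) = (((0:ℤ), -Kc A) : ℤ×ℤ) by
        rw [Prod.mk.injEq]; exact ⟨mul_zero _, by ring⟩,
        show ((Kc A * 0 + 1, Kc A * (-1)) : ℤ×ℤ) = (((1:ℤ), -Kc A) : ℤ×ℤ) by
        rw [Prod.mk.injEq]; exact ⟨by ring, by ring⟩] at d0m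
      refine ⟨⟨?_, ?_⟩, ⟨?_, ?_⟩, ⟨?_, ?_⟩, ⟨?_, ?_⟩⟩
      · show c (a₀ + m * (Kc A * (P1 + 1)), b₀ + n * (Kc A * P2)) = true
        rw [show a₀ + m * (Kc A * (P1 + 1)) = a₀ + m * (Kc A * P1) + m * (Kc A) by ring,
          show b₀ + n * (Kc A * P2) = b₀ + n * (Kc A * P2) + n * 0 by ring,
          hv (Kc A) 0 (by linarith) hKW (by linarith) (by linarith)]
        exact d10.1
      · show c (a₀ + m * (Kc A * (P1 + 1)) + m, b₀ + n * (Kc A * P2)) = true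
        rw [show a₀ + m * (Kc A * (P1 + 1)) + m = a₀ + m * (Kc A * P1) + m * (Kc A + 1) by ring,
          show b₀ + n * (Kc A * P2) = b₀ + n * (Kc A * P2) + n * 0 by ring,
          hv (Kc A + 1) 0 (by linarith) (by linarith) (by linarith) (by linarith)]
        exact d10.2
      · show c (a₀ + m * (Kc A * (P1 - 1)), b₀ + n * (Kc A * P2)) = true
        rw [show a₀ + m * (Kc A * (P1 - 1)) = a₀ + m * (Kc A * P1) + m * (-Kc A) by ring,
          show b₀ + n * (Kc A * P2) = b₀ + n * (Kc A * P2) + n * 0 by ring,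
          hv (-Kc A) 0 (by linarith) (by linarith) (by linarith) (by linarith)]
        exact dm0.1
      · show c (a₀ + m * (Kc A * (P1 - 1)) + m, b₀ + n * (Kc A * P2)) = true
        rw [show a₀ + m * (Kc A * (P1 - 1)) + m = a₀ + m * (Kc A * P1) + m * (1 - Kc A) by ring,
          show b₀ + n * (Kc A * P2) = b₀ + n * (Kc A * P2) + n * 0 by ring,
          hv (1 - Kc A) 0 (by linarith) (by linarith) (by linarith) (by linarith)]
        exact dm0.2
      · show c (a₀ + m * (Kc A * P1), b₀ + n * (Kc A * (P2 + 1))) = true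
        rw [show a₀ + m * (Kc A * P1) = a₀ + m * (Kc A * P1) + m * 0 by ring,
          show b₀ + n * (Kc A * (P2 + 1)) = b₀ + n * (Kc A * P2) + n * (Kc A) by ring,
          hv 0 (Kc A) (by linarith) (by linarith) (by linarith) hKW]
        exact d01.1
      · show c (a₀ + m * (Kc A * P1) + m, b₀ + n * (Kc A * (P2 + 1))) = true
        rw [show a₀ + m * (Kc A * P1) + m = a₀ + m * (Kc A * P1) + m * 1 by ring,
          show b₀ + n * (Kc A * (P2 + 1)) = b₀ + n * (Kc A * P2) + n * (Kc A) by ring,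
          hv 1 (Kc A) (by linarith) (by linarith) (by linarith) hKW]
        exact d01.2
      · show c (a₀ + m * (Kc A * P1), b₀ + n * (Kc A * (P2 - 1))) = true
        rw [show a₀ + m * (Kc A * P1) = a₀ + m * (Kc A * P1) + m * 0 by ring,
          show b₀ + n * (Kc A * (P2 - 1)) = b₀ + n * (Kc A * P2) + n * (-Kc A) by ring,
          hv 0 (-Kc A) (by linarith) (by linarith) (by linarith) (by linarith)]
        exact d0m.1
      · show c (a₀ + m * (Kc A * P1) + m, b₀ + n * (Kc A * (P2 - 1))) = true
        rw [show a₀ + m * (Kc A * P1) + m = a₀ + m * (Kc A * P1) + m * 1 by ring,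
          show b₀ + n * (Kc A * (P2 - 1)) = b₀ + n * (Kc A * P2) + n * (-Kc A) by ring,
          hv 1 (-Kc A) (by linarith) (by linarith) (by linarith) (by linarith)]
        exact d0m.2
    have hDomAll : ∀ P : ℤ × ℤ, Dom P := by
      have key : ∀ N : ℕ, ∀ P : ℤ × ℤ, P.1.natAbs + P.2.natAbs ≤ N → Dom P := by
        intro N
        induction N with
        | zero =>
          intro P hP
          obtain ⟨P1, P2⟩ := P
          dsimp only at hP
          have h1 : P1 = 0 := by omega
          have h2 : P2 = 0 := by omega
          rw [h1, h2]; exact hDom0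
        | succ N ih =>
          intro P hP
          obtain ⟨P1, P2⟩ := P
          dsimp only at hP
          by_cases h : P1.natAbs + P2.natAbs ≤ N
          · exact ih (P1, P2) h
          · rcases lt_trichotomy P1 0 with h1 | h1 | h1
            · have hd := ih (P1 + 1, P2) (by dsimp only; omega)
              have hh := (hstep (P1 + 1) P2 hd).2.1
              rw [show (P1 + 1 - 1 : ℤ) = P1 by ring] at hh
              exact hh
            · rcases lt_trichotomy P2 0 with h2 | h2 | h2
              · have hd := ih (P1, P2 + 1) (by dsimp only; omega)
                have hh := (hstep P1 (P2 + 1) hd).2.2.2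
                rw [show (P2 + 1 - 1 : ℤ) = P2 by ring] at hh
                exact hh
              · exfalso; omega
              · have hd := ih (P1, P2 - 1) (by dsimp only; omega)
                have hh := (hstep P1 (P2 - 1) hd).2.2.1
                rw [show (P2 - 1 + 1 : ℤ) = P2 by ring] at hh
                exact hh
            · have hd := ih (P1 - 1, P2) (by dsimp only; omega)
              have hh := (hstep (P1 - 1) P2 hd).1
              rw [show (P1 - 1 + 1 : ℤ) = P1 by ring] at hh
              exact hh
      intro P; exact key (P.1.natAbs + P.2.natAbs) P le_rfl
    choose yP hyP1 hyP2 using fun P : ℤ × ℤ => hvalgen P (hDomAll P)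
    set yhat : Config A := fun P => yP P ((0:ℤ), (0:ℤ)) with hyhatdef
    have hidxlt : ∀ a : A, (idx a : ℤ) < Fintype.card A := fun a => by exact_mod_cast idx_lt a
    have hKd : Kc A = 2 * (Fintype.card A : ℤ) + 4 := rfl
    have hbit : ∀ (P : ℤ × ℤ) (ℓ : A),
        c (a₀ + m * (Kc A * P.1 + (2 * (idx ℓ : ℤ) + 2)), b₀ + n * (Kc A * P.2 + 2)) = true
          ↔ ℓ = yhat P := by
      intro P ℓ
      have hb1 : (0:ℤ) ≤ 2 * (idx ℓ : ℤ) + 2 := by positivity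
      have hb2 : 2 * (idx ℓ : ℤ) + 2 < Kc A := by have := hidxlt ℓ; omega
      have h := hvalM P (yP P) (hyP2 P) (2 * (idx ℓ : ℤ) + 2) 2
        (by linarith) (by linarith) (by linarith) (by linarith)
      rw [show a₀ + m * (Kc A * P.1 + (2 * (idx ℓ : ℤ) + 2))
          = a₀ + m * (Kc A * P.1) + m * (2 * (idx ℓ : ℤ) + 2) by ring,
        show b₀ + n * (Kc A * P.2 + 2) = b₀ + n * (Kc A * P.2) + n * 2 by ring, h,
        show ((2 * (idx ℓ : ℤ) + 2, (2:ℤ)) : ℤ × ℤ)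
          = (Kc A * 0 + (2 * (idx ℓ : ℤ) + 2), Kc A * 0 + 2) by
          rw [Prod.mk.injEq]; constructor <;> ring,
        Zc_apply _ 0 0 _ _ hb1 hb2 (by omega) (by omega), Eblk_true_iff]
      constructor
      · rintro (⟨h3, -⟩ | ⟨-, h4⟩)
        · omega
        · have : idx ℓ = idx (yP P (0, 0)) := by omega
          exact idx_inj this
      · rintro rfl
        right; exact ⟨rfl, rfl⟩
    have hcoh : ∀ (P r : ℤ × ℤ), r.1.natAbs ≤ rY → r.2.natAbs ≤ rY → yP P r = yhat (P + r) := by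
      intro P r h1 h2
      rw [← hbit (P + r) (yP P r)]
      have hb2 : 2 * (idx (yP P r) : ℤ) + 2 < Kc A := by have := hidxlt (yP P r); omega
      have hKrY : Kc A * (rY:ℤ) + Kc A ≤ W := by
        have e : Kc A * ((rY:ℤ) + 1) = Kc A * (rY:ℤ) + Kc A := by ring
        linarith
      have hr1a : Kc A * r.1 ≤ Kc A * (rY:ℤ) := mul_le_mul_of_nonneg_left (by omega) hK0.le
      have hr1b : Kc A * (-(rY:ℤ)) ≤ Kc A * r.1 := mul_le_mul_of_nonneg_left (by omega) hK0.le
      have hr2a : Kc A * r.2 ≤ Kc A * (rY:ℤ) := mul_le_mul_of_nonneg_left (by omega) hK0.le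
      have hr2b : Kc A * (-(rY:ℤ)) ≤ Kc A * r.2 := mul_le_mul_of_nonneg_left (by omega) hK0.le
      have eneg : Kc A * (-(rY:ℤ)) = -(Kc A * (rY:ℤ)) := by ring
      have h := hvalM P (yP P) (hyP2 P) (Kc A * r.1 + (2 * (idx (yP P r) : ℤ) + 2))
        (Kc A * r.2 + 2) (by linarith) (by linarith) (by linarith) (by linarith)
      rw [show a₀ + m * (Kc A * (P + r).1 + (2 * (idx (yP P r) : ℤ) + 2))
          = a₀ + m * (Kc A * P.1) + m * (Kc A * r.1 + (2 * (idx (yP P r) : ℤ) + 2)) by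
          rw [Prod.fst_add]; ring,
        show b₀ + n * (Kc A * (P + r).2 + 2)
          = b₀ + n * (Kc A * P.2) + n * (Kc A * r.2 + 2) by rw [Prod.snd_add]; ring,
        h, Zc_apply _ r.1 r.2 _ _ (by positivity) hb2 (by omega) (by omega), Eblk_true_iff]
      right; exact ⟨rfl, rfl⟩
    have hyhatY : yhat ∈ Y := by
      rw [hY]
      simp only [Set.mem_setOf_eq]
      intro u
      have h := hyP1 u
      have e : (fun v : DY => yhat (u + (v : ℤ × ℤ)))
          = (fun v : DY => yP u ((0 : ℤ × ℤ) + (v : ℤ × ℤ))) := by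
        funext v
        have hv := hrY v v.2
        rw [zero_add]
        exact (hcoh u v hv.1 hv.2).symm
      rw [e]; exact h
    refine ⟨yhat, hyhatY, ((a₀, b₀) : ℤ × ℤ), ?_⟩
    funext x
    have hmK : (0:ℤ) < m * Kc A := by positivity
    have hnK : (0:ℤ) < n * Kc A := by positivity
    set P1 : ℤ := (x.1 - a₀) / (m * Kc A) with hP1
    set P2 : ℤ := (x.2 - b₀) / (n * Kc A) with hP2
    set v1 : ℤ := (x.1 - a₀) % (m * Kc A) with hv1
    set v2 : ℤ := (x.2 - b₀) % (n * Kc A) with hv2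
    have hv1a : 0 ≤ v1 := Int.emod_nonneg _ hmK.ne'
    have hv1b : v1 < m * Kc A := Int.emod_lt_of_pos _ hmK
    have hv2a : 0 ≤ v2 := Int.emod_nonneg _ hnK.ne'
    have hv2b : v2 < n * Kc A := Int.emod_lt_of_pos _ hnK
    have hx1 : x.1 = a₀ + m * (Kc A * P1) + v1 := by
      have h := Int.mul_ediv_add_emod (x.1 - a₀) (m * Kc A)
      have e : m * Kc A * P1 = m * (Kc A * P1) := by ring
      rw [hP1, hv1] at *
      linarith [h, e]
    have hx2 : x.2 = b₀ + n * (Kc A * P2) + v2 := by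
      have h := Int.mul_ediv_add_emod (x.2 - b₀) (n * Kc A)
      have e : n * Kc A * P2 = n * (Kc A * P2) := by ring
      linarith [h, e]
    have hmW : 0 < m * W := mul_pos hm hW0
    have hnW : 0 < n * W := mul_pos hn hW0
    have hKWm : m * Kc A ≤ m * W := mul_le_mul_of_nonneg_left (by linarith) hm.le
    have hKWn : n * Kc A ≤ n * W := mul_le_mul_of_nonneg_left (by linarith) hn.le
    have hvD : ((v1, v2) : ℤ × ℤ) ∈ Dfin := by
      apply memD <;> dsimp only
      · exact le_trans (neg_nonpos_of_nonneg hmW.le) hv1a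
      · exact le_trans hv1b.le hKWm
      · exact le_trans (neg_nonpos_of_nonneg hnW.le) hv2a
      · exact le_trans hv2b.le hKWn
    have h := hyP2 (P1, P2) (v1, v2) hvD
    have hxe : x = ((a₀ + m * (Kc A * ((P1, P2) : ℤ × ℤ).1),
        b₀ + n * (Kc A * ((P1, P2) : ℤ × ℤ).2)) + (v1, v2) : ℤ × ℤ) := by
      rw [show ((a₀ + m * (Kc A * ((P1, P2) : ℤ × ℤ).1),
          b₀ + n * (Kc A * ((P1, P2) : ℤ × ℤ).2)) + (v1, v2) : ℤ × ℤ)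
          = (a₀ + m * (Kc A * P1) + v1, b₀ + n * (Kc A * P2) + v2) from rfl]
      exact Prod.ext_iff.mpr ⟨hx1, hx2⟩
    have hL : c x = Psi m n (yP (P1, P2)) 0 (v1, v2) := by rw [hxe]; exact h
    rw [hL]
    by_cases hdv : m ∣ v1 ∧ n ∣ v2
    · obtain ⟨⟨γ, hγ⟩, ⟨δ, hδ⟩⟩ := hdv
      have b1 := hv1a; have b2 := hv1b
      rw [hγ] at b1 b2
      obtain ⟨hγ0, hγK⟩ := bound_of_mul hm b1 b2
      have b3 := hv2a; have b4 := hv2b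
      rw [hδ] at b3 b4
      obtain ⟨hδ0, hδK⟩ := bound_of_mul hn b3 b4
      have e2 : ((v1, v2) : ℤ × ℤ) = (((0:ℤ×ℤ)).1 + m * γ, ((0:ℤ×ℤ)).2 + n * δ) := by
        rw [Prod.mk.injEq]
        constructor
        · rw [hγ]; exact (zero_add _).symm
        · rw [hδ]; exact (zero_add _).symm
      rw [e2, Psi_on hm hn]
      have ex : x = ((((a₀, b₀) : ℤ × ℤ)).1 + m * (Kc A * P1 + γ),
          (((a₀, b₀) : ℤ × ℤ)).2 + n * (Kc A * P2 + δ)) := by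
        refine Prod.ext_iff.mpr ⟨?_, ?_⟩
        · show x.1 = a₀ + m * (Kc A * P1 + γ)
          rw [hx1, hγ]; ring
        · show x.2 = b₀ + n * (Kc A * P2 + δ)
          rw [hx2, hδ]; ring
      rw [ex, Psi_on hm hn, Zc_apply yhat P1 P2 γ δ hγ0 hγK hδ0 hδK]
      conv_lhs => rw [show ((γ, δ) : ℤ × ℤ) = (Kc A * 0 + γ, Kc A * 0 + δ) by
          rw [Prod.mk.injEq]; constructor <;> ring]
      rw [Zc_apply (yP (P1, P2)) 0 0 γ δ hγ0 hγK hδ0 hδK]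
    · have hR : ¬(m ∣ ((v1, v2) : ℤ×ℤ).1 - ((0:ℤ×ℤ)).1 ∧ n ∣ ((v1, v2) : ℤ×ℤ).2 - ((0:ℤ×ℤ)).2) := by
        simpa using hdv
      have hL2 : ¬(m ∣ (x.1 - (((a₀, b₀) : ℤ×ℤ)).1) ∧ n ∣ (x.2 - (((a₀, b₀) : ℤ×ℤ)).2)) := by
        intro hcon
        apply hdv
        obtain ⟨hc1, hc2⟩ := hcon
        replace hc1 : m ∣ x.1 - a₀ := hc1
        replace hc2 : n ∣ x.2 - b₀ := hc2
        have e : x.1 - a₀ = m * (Kc A * P1) + v1 := by rw [hx1]; ring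
        have e' : x.2 - b₀ = n * (Kc A * P2) + v2 := by rw [hx2]; ring
        rw [e] at hc1
        rw [e'] at hc2
        exact ⟨(dvd_add_right (dvd_mul_right _ _)).mp hc1,
          (dvd_add_right (dvd_mul_right _ _)).mp hc2⟩
      rw [Psi_off (yP (P1, P2)) 0 ((v1, v2) : ℤ×ℤ) hR, Psi_off yhat ((a₀, b₀) : ℤ×ℤ) x hL2]

end SFTAux

/-- For all positive `m, n` there is an aperiodic SFT `X ⊆ {0,1}^(ℤ²)` in which
every configuration has exactly `mn + 1` distinct `m × n` patterns.
(The existence of some aperiodic SFT, e.g. the Robinson tilings, is assumed.) -/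
theorem exists_aperiodic_SFT_with_complexity_mn_add_one
    (hRob : ∃ (A : Type) (_ : Fintype A) (Y : Set (Config A)),
      IsSFT Y ∧ Aperiodic Y) :
    ∀ m n : ℕ, 0 < m → 0 < n →
      ∃ X : Set (Config Bool), IsSFT X ∧ Aperiodic X ∧
        ∀ c ∈ X, (langRect m n c).ncard = m * n + 1 := by
  obtain ⟨A, hfin, Y, hSFT, hap⟩ := hRob
  haveI := hfin
  obtain ⟨DY, PY, hY⟩ := hSFT
  intro m n hm hn
  have hM : (0:ℤ) < (m:ℤ) := by exact_mod_cast hm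
  have hN : (0:ℤ) < (n:ℤ) := by exact_mod_cast hn
  exact ⟨SFTAux.Xset (m:ℤ) (n:ℤ) Y, SFTAux.isSFT_X hM hN DY PY Y hY,
    SFTAux.aperiodic_X hM hN Y hap, fun c hc => SFTAux.complexity m n hm hn Y c hc⟩
end

section
/- Let Y be an aperiodic SFT over alphabet A, let S : A → {0,1}^({0,…,k−1}²) be an injective encoding, extended cellwise to configurations, and let σ be the substitution 0 ↦ R₀, 1 ↦ R₁ where R₀ is the m×n all-zero block and R₁ is the m×n block with a single 1 at (0,0). Then every configuration c in X = σ(S(Y)) satisfies |L_{m,n}(c)| ≤ mn + 1. -/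
/-- Cellwise extension of a letter-to-`k×k`-block encoding `S` to
configurations: the cell of `c` at `(i,j)` is replaced by the block `S(c_{i,j})`
with lower-left corner at `(k·i, k·j)`. -/
def encode {A : Type*} (k : ℕ) (S : A → Fin k × Fin k → Bool) (hk : 0 < k)
    (c : Config A) : Config Bool :=
  fun v =>
    S (c (v.1.fdiv k, v.2.fdiv k))
      (⟨(v.1.fmod k).toNat % k, Nat.mod_lt _ hk⟩, ⟨(v.2.fmod k).toNat % k, Nat.mod_lt _ hk⟩)

/-- The substitution `0 ↦ R₀`, `1 ↦ R₁` (where `R₀` is the all-zero `m × n`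
block and `R₁` has a single `1` at `(0,0)`), applied to a binary configuration. -/
def blowup (m n : ℕ) (d : Config Bool) : Config Bool :=
  fun v =>
    if v.1.fmod m = 0 ∧ v.2.fmod n = 0 then d (v.1.fdiv m, v.2.fdiv n)
    else false

lemma Fin.eq_of_fmod_add_eq_zero {m : ℕ} (a : ℤ) {i i' : Fin m}
    (h : (a + i).fmod m = 0) (h' : (a + i').fmod m = 0) : i = i' := by
  rw [Int.fmod_eq_emod_of_nonneg _ (by positivity)] at h h'
  have hmod : (i : ℤ) ≡ i' [ZMOD m] := Int.ModEq.add_left_cancel' a (h.trans h'.symm)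
  rw [Int.ModEq, Int.emod_eq_of_lt (by positivity) (by exact_mod_cast i.isLt),
    Int.emod_eq_of_lt (by positivity) (by exact_mod_cast i'.isLt)] at hmod
  exact Fin.ext (by exact_mod_cast hmod)

lemma ncard_setOf_subsingleton_true_le (ι : Type*) [Fintype ι] [DecidableEq ι] :
    {p : ι → Bool | {x | p x = true}.Subsingleton}.ncard ≤ Fintype.card ι + 1 := by
  set indicator : ι → ι → Bool := fun x y => decide (y = x)
  have hsub : {p : ι → Bool | {x | p x = true}.Subsingleton} ⊆
      insert (fun _ => false) (Set.range indicator) := by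
    intro p hp
    rcases (hp : {x | p x = true}.Subsingleton).eq_empty_or_singleton with hnone | ⟨x, hx⟩
    · left
      funext y
      simpa using Set.eq_empty_iff_forall_notMem.mp hnone y
    · right
      refine ⟨x, funext fun y => ?_⟩
      have hy := Set.ext_iff.mp hx y
      simp only [Set.mem_ofPred_eq, Set.mem_singleton_iff] at hy
      simp [indicator, ← hy]
  calc _ ≤ (insert (fun _ => false) (Set.range indicator)).ncard :=
        Set.ncard_le_ncard hsub (Set.toFinite _)
    _ ≤ (Set.range indicator).ncard + 1 := Set.ncard_insert_le _ _
    _ ≤ Fintype.card ι + 1 := by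
        rw [← Set.image_univ, ← Nat.card_eq_fintype_card, ← Set.ncard_univ]
        exact Nat.add_le_add_right (Set.ncard_image_le (Set.toFinite _)) 1

lemma setOf_true_subsingleton_of_mem_langRect_blowup {m n : ℕ} {d : Config Bool}
    {p : Fin m × Fin n → Bool} (hp : p ∈ langRect m n (blowup m n d)) :
    {x | p x = true}.Subsingleton := by
  obtain ⟨u, hu⟩ := hp
  rintro ⟨i, j⟩ hij ⟨i', j'⟩ hij'
  simp only [Set.mem_ofPred_eq, hu, blowup] at hij hij'
  split_ifs at hij hij' with hcorner hcorner'
  exact Prod.ext (Fin.eq_of_fmod_add_eq_zero u.1 hcorner.1 hcorner'.1)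
    (Fin.eq_of_fmod_add_eq_zero u.2 hcorner.2 hcorner'.2)

lemma langRect_blowup_ncard_le (m n : ℕ) (d : Config Bool) :
    (langRect m n (blowup m n d)).ncard ≤ m * n + 1 :=
  calc _ ≤ {p : Fin m × Fin n → Bool | {x | p x = true}.Subsingleton}.ncard :=
        Set.ncard_le_ncard (fun _ => setOf_true_subsingleton_of_mem_langRect_blowup)
          (Set.toFinite _)
    _ ≤ Fintype.card (Fin m × Fin n) + 1 := ncard_setOf_subsingleton_true_le _
    _ = m * n + 1 := by simp

theorem blowup_encode_complexity_le_general {A : Type*}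
    (Y : Set (Config A))
    (k : ℕ) (hk : 0 < k) (S : A → Fin k × Fin k → Bool)
    (m n : ℕ) :
    ∀ c ∈ (fun y : Config A => blowup m n (encode k S hk y)) '' Y,
      (langRect m n c).ncard ≤ m * n + 1 := by
  rintro c ⟨y, -, rfl⟩
  exact langRect_blowup_ncard_le m n (encode k S hk y)

/-- If `Y` is an aperiodic SFT, `S` an injective `k × k` binary encoding of its
alphabet and `σ` the sparse substitution `0 ↦ R₀, 1 ↦ R₁`, then every
configuration of `X = σ(S(Y))` satisfies `|L_{m,n}(c)| ≤ mn + 1`. -/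
theorem blowup_encode_complexity_le {A : Type*} [Fintype A]
    (Y : Set (Config A)) (hSFT : IsSFT Y) (haper : Aperiodic Y)
    (k : ℕ) (hk : 0 < k) (S : A → Fin k × Fin k → Bool)
    (hS : Function.Injective S)
    (m n : ℕ) (hm : 0 < m) (hn : 0 < n) :
    ∀ c ∈ (fun y : Config A => blowup m n (encode k S hk y)) '' Y,
      (langRect m n c).ncard ≤ m * n + 1 :=
  blowup_encode_complexity_le_general Y k hk S m n
end

section
/- Let σ be an invertible substitution of size (M,M) over a finite alphabet A, and suppose every pattern of L(X^σ) whose support contains the square {0,…,ρ−1}² can be uniquely desubstituted by σ. Then for every k ≥ 1, every pattern of L(X^σ) whose support contains {0,…,(ρ+1)M^{k−1} − 2}² can be uniquely desubstituted by σ^k. -/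
/-- A pattern `p` with (finite) support `D` appears in a configuration `c`:
there is `u ∈ ℤ²` with `p v = c (v - u)` for all `v ∈ D`. -/
def AppearsInConfig {A : Type*} (D : Set (ℤ × ℤ)) (p : ℤ × ℤ → A)
    (c : Config A) : Prop :=
  ∃ u : ℤ × ℤ, ∀ v ∈ D, p v = c (v - u)

/-- A pattern `p` with support `D` appears in a pattern `q` with support `D'`. -/
def AppearsInPattern {A : Type*} (D : Set (ℤ × ℤ)) (p : ℤ × ℤ → A)
    (D' : Set (ℤ × ℤ)) (q : ℤ × ℤ → A) : Prop :=
  ∃ u : ℤ × ℤ, ∀ v ∈ D, v - u ∈ D' ∧ p v = q (v - u)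

/-- Application of a substitution `σ` of size `(m,n)` to a pattern or
configuration (given as a function on `ℤ²`), by block replacement: the cell at
`u` is replaced by the block `σ(p_u)` with lower-left corner at `(m·u₁, n·u₂)`. -/
def substApply {A : Type*} (m n : ℕ) (σ : Subst A) (p : ℤ × ℤ → A) : ℤ × ℤ → A :=
  fun v => σ (p (v.1.fdiv m, v.2.fdiv n)) (v.1.fmod m).toNat (v.2.fmod n).toNat

/-- Support of `σ(p)` when `p` has support `D`: the union of the blocks
`m·u + {0,…,m−1} × n·u + {0,…,n−1}` over `u ∈ D`. -/
def blowSupport (m n : ℕ) (D : Set (ℤ × ℤ)) : Set (ℤ × ℤ) :=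
  {v | (v.1.fdiv m, v.2.fdiv n) ∈ D}

/-- The pattern `σ^k(a)`, supported on `{0,…,m^k−1} × {0,…,n^k−1}`. -/
def letterPattern {A : Type*} (m n : ℕ) (σ : Subst A) (k : ℕ) (a : A) :
    ℤ × ℤ → A :=
  fun v => iterSub m n σ k a v.1.toNat v.2.toNat

/-- The support `{0,…,m^k−1} × {0,…,n^k−1}` of `σ^k(a)`. -/
def letterSupport (m n k : ℕ) : Set (ℤ × ℤ) :=
  {v | 0 ≤ v.1 ∧ v.1 < (m : ℤ) ^ k ∧ 0 ≤ v.2 ∧ v.2 < (n : ℤ) ^ k}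

/-- The substitutive subshift `X^σ`: configurations all of whose finite
patterns appear in `σ^k(a)` for some letter `a` and some `k`. -/
def Xsub {A : Type*} (m n : ℕ) (σ : Subst A) : Set (Config A) :=
  {c | ∀ D : Set (ℤ × ℤ), D.Finite →
    ∃ (a : A) (k : ℕ),
      AppearsInPattern D c (letterSupport m n k) (letterPattern m n σ k a)}

/-- `σ` (of size `(m,n)`) is primitive: some power `σ^k` maps every letter to
a block in which every letter appears. -/
def Primitive {A : Type*} (m n : ℕ) (σ : Subst A) : Prop :=
  ∃ k : ℕ, ∀ a b : A, ∃ i j : ℕ,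
    i < m ^ k ∧ j < n ^ k ∧ iterSub m n σ k b i j = a

/-- The square `{0,…,r−1}²` in `ℤ²`. -/
def sqSet (r : ℕ) : Set (ℤ × ℤ) :=
  {v | 0 ≤ v.1 ∧ v.1 < (r : ℤ) ∧ 0 ≤ v.2 ∧ v.2 < (r : ℤ)}

/-- A substitution of size `(m,n)` is invertible: distinct letters have
distinct image blocks. -/
def Invertible' {A : Type*} (m n : ℕ) (σ : Subst A) : Prop :=
  ∀ a b : A, (∀ i < m, ∀ j < n, σ a i j = σ b i j) → a = b

/-- A pattern `p` with support `D` can be uniquely desubstituted by the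
substitution `τ` of size `(m,n)` relative to the subshift `Xs`: there is
`t ∈ ℤ²`, unique modulo `(m,n)`, with `p = τ_t(τ(c))|_D` for some `c ∈ Xs`. -/
def UniqueDesub {A : Type*} (m n : ℕ) (τ : Subst A) (Xs : Set (Config A))
    (D : Set (ℤ × ℤ)) (p : ℤ × ℤ → A) : Prop :=
  (∃ t : ℤ × ℤ, ∃ c ∈ Xs, ∀ v ∈ D, p v = substApply m n τ c (v - t)) ∧
  ∀ t t' : ℤ × ℤ,
    (∃ c ∈ Xs, ∀ v ∈ D, p v = substApply m n τ c (v - t)) →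
    (∃ c ∈ Xs, ∀ v ∈ D, p v = substApply m n τ c (v - t')) →
    t.1 % (m : ℤ) = t'.1 % (m : ℤ) ∧ t.2 % (n : ℤ) = t'.2 % (n : ℤ)

/-!
Induction on `k`, with `σ^(k+1) = σ ∘ σ^k`. A pattern whose support contains the square of side
`(ρ+1)M^k - 1` contains the square of side `ρ`, so it is a shift of `σ(c)` by some `t₀ ∈ [0,M)²`,
unique modulo `M`. Its support contains every full block of that grid indexed by the square of
side `(ρ+1)M^(k-1) - 1`, so invertibility of `σ` determines `c` there, and by induction `c`
desubstitutes uniquely by `σ^k` with an offset `s` unique modulo `M^k`. The offset `t₀ + M s` is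
then unique modulo `M^(k+1)`.
-/

section

variable {A : Type*}

def blockIndex (M : ℕ) (v : ℤ × ℤ) : ℤ × ℤ :=
  (v.1.fdiv M, v.2.fdiv M)

lemma fdiv_fmod_mul_add {M : ℕ} (x : ℤ) {y : ℤ} (hy : 0 ≤ y) (hyM : y < M) :
    ((M : ℤ) * x + y).fdiv M = x ∧ ((M : ℤ) * x + y).fmod M = y :=
  (Int.fdiv_fmod_unique (by omega)).2 ⟨by ring, hy, hyM⟩

lemma blockIndex_smul_add {M : ℕ} (w : ℤ × ℤ) {b : ℤ × ℤ} (hb : b ∈ sqSet M) :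
    blockIndex M ((M : ℤ) • w + b) = w := by
  obtain ⟨h1, h2, h3, h4⟩ := hb
  simp only [blockIndex, Prod.fst_add, Prod.snd_add, Prod.smul_fst, Prod.smul_snd, smul_eq_mul,
    (fdiv_fmod_mul_add _ h1 h2).1, (fdiv_fmod_mul_add _ h3 h4).1]

lemma exists_smul_blockIndex_add_eq {M : ℕ} (hM : 0 < M) (v : ℤ × ℤ) :
    ∃ b ∈ sqSet M, (M : ℤ) • blockIndex M v + b = v := by
  have hM' : (0 : ℤ) < M := by exact_mod_cast hM
  refine ⟨(v.1.fmod M, v.2.fmod M), ⟨Int.fmod_nonneg_of_pos _ hM', Int.fmod_lt_of_pos _ hM',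
    Int.fmod_nonneg_of_pos _ hM', Int.fmod_lt_of_pos _ hM'⟩, ?_⟩
  ext <;> simp [blockIndex, Int.mul_fdiv_add_fmod]

lemma substApply_smul_add {M : ℕ} (σ : Subst A) (d : ℤ × ℤ → A) (w : ℤ × ℤ) {b : ℤ × ℤ}
    (hb : b ∈ sqSet M) :
    substApply M M σ d ((M : ℤ) • w + b) = σ (d w) b.1.toNat b.2.toNat := by
  obtain ⟨h1, h2, h3, h4⟩ := hb
  simp only [substApply, Prod.fst_add, Prod.snd_add, Prod.smul_fst, Prod.smul_snd, smul_eq_mul,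
    fdiv_fmod_mul_add _ h1 h2, fdiv_fmod_mul_add _ h3 h4]

lemma substApply_sub_smul {M : ℕ} (hM : 0 < M) (σ : Subst A) (d : ℤ × ℤ → A) (v e : ℤ × ℤ) :
    substApply M M σ d (v - (M : ℤ) • e) = substApply M M σ (fun u => d (u - e)) v := by
  have hM' : (M : ℤ) ≠ 0 := by exact_mod_cast hM.ne'
  have hsub : ∀ x y : ℤ, x - M * y = x + -y * M := fun x y => by ring
  simp only [substApply, Prod.fst_sub, Prod.snd_sub, Prod.smul_fst, Prod.smul_snd, smul_eq_mul,
    hsub, Int.add_mul_fdiv_right _ _ hM', Int.add_mul_fmod_self_right]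
  rfl

lemma toNat_fmod_mul_mod {M N : ℕ} (hM : 0 < M) (hN : 0 < N) (a : ℤ) :
    (a.fmod ((M : ℤ) * N)).toNat % M = (a.fmod M).toNat := by
  obtain ⟨n, hn⟩ := Int.eq_ofNat_of_zero_le (Int.fmod_nonneg_of_pos a (b := (M : ℤ) * N)
    (by positivity))
  rw [← Int.fmod_fmod_of_dvd a (dvd_mul_right (M : ℤ) N), hn,
    ← Int.ofNat_fmod, Int.toNat_natCast, Int.toNat_natCast]

lemma toNat_fmod_mul_div {M N : ℕ} (hM : 0 < M) (hN : 0 < N) (a : ℤ) :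
    (a.fmod ((M : ℤ) * N)).toNat / M = ((a.fdiv M).fmod N).toNat := by
  have hMN : (0 : ℤ) < M * N := by positivity
  obtain ⟨n, hn⟩ := Int.eq_ofNat_of_zero_le (Int.fmod_nonneg_of_pos a hMN)
  have hnlt : n < M * N := by have := Int.fmod_lt_of_pos a hMN; rw [hn] at this; exact_mod_cast this
  have ha : a = n + (a.fdiv (M * N) * N) * M := by
    rw [← hn, mul_assoc, mul_comm (N : ℤ) M]
    exact (Int.fmod_add_fdiv_mul a _).symm
  rw [hn, Int.toNat_natCast, ha, Int.add_mul_fdiv_right _ _ (by exact_mod_cast hM.ne'),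
    Int.add_mul_fmod_self_right, ← Int.ofNat_fdiv, ← Int.ofNat_fmod, Int.toNat_natCast,
    Nat.mod_eq_of_lt (Nat.div_lt_of_lt_mul hnlt)]

lemma substApply_substApply {M N : ℕ} (hM : 0 < M) (hN : 0 < N) (σ τ : Subst A)
    (c : ℤ × ℤ → A) :
    substApply M M σ (substApply N N τ c) = substApply (M * N) (M * N) (compSub M M σ τ) c := by
  funext v
  simp only [substApply, compSub, toNat_fmod_mul_div hM hN, toNat_fmod_mul_mod hM hN,
    Nat.cast_mul, Int.fdiv_fdiv_eq_fdiv_mul _ (Nat.cast_nonneg M) (Nat.cast_nonneg N)]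

lemma substApply_iterSub_one {M : ℕ} (hM : 0 < M) (σ : Subst A) :
    substApply M M (iterSub M M σ 1) = substApply M M σ := by
  have hM' : (0 : ℤ) < M := by exact_mod_cast hM
  have hmod : ∀ x : ℤ, (x.fmod M).toNat % M = (x.fmod M).toNat := fun x => Nat.mod_eq_of_lt <| by
    have := Int.fmod_nonneg_of_pos x hM'; have := Int.fmod_lt_of_pos x hM'; omega
  funext c v
  simp only [substApply, iterSub, compSub, hmod]

lemma sqSet_mono {a b : ℕ} (h : a ≤ b) : sqSet a ⊆ sqSet b := by
  have : (a : ℤ) ≤ b := by exact_mod_cast h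
  rintro v ⟨h1, h2, h3, h4⟩
  exact ⟨h1, by omega, h3, by omega⟩

lemma letterSupport_eq_sqSet (M k : ℕ) : letterSupport M M k = sqSet (M ^ k) := by
  simp [letterSupport, sqSet]

lemma smul_add_mem_sqSet {M r : ℕ} {w b : ℤ × ℤ} (hw : w ∈ sqSet r) (hb : b ∈ sqSet M) :
    (M : ℤ) • w + b ∈ sqSet (M * r) := by
  obtain ⟨hw1, hw2, hw3, hw4⟩ := hw
  obtain ⟨hb1, hb2, hb3, hb4⟩ := hb
  simp only [sqSet, Set.mem_ofPred_eq, Prod.fst_add, Prod.snd_add, Prod.smul_fst, Prod.smul_snd,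
    smul_eq_mul, Nat.cast_mul]
  refine ⟨by positivity, ?_, by positivity, ?_⟩ <;> nlinarith

lemma add_smul_add_mem_sqSet {M r : ℕ} {a w b : ℤ × ℤ} (ha : a ∈ sqSet M) (hw : w ∈ sqSet r)
    (hb : b ∈ sqSet M) : a + (M : ℤ) • w + b ∈ sqSet (M * (r + 1) - 1) := by
  obtain ⟨ha1, ha2, ha3, ha4⟩ := ha
  obtain ⟨hw1, hw2, hw3, hw4⟩ := hw
  obtain ⟨hb1, hb2, hb3, hb4⟩ := hb
  have hM : 1 ≤ M * (r + 1) := Nat.mul_pos (by omega) r.succ_pos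
  simp only [sqSet, Set.mem_ofPred_eq, Prod.fst_add, Prod.snd_add, Prod.smul_fst, Prod.smul_snd,
    smul_eq_mul, Nat.cast_sub hM, Nat.cast_mul, Nat.cast_add, Nat.cast_one]
  refine ⟨by positivity, ?_, by positivity, ?_⟩ <;> nlinarith

lemma letterPattern_eq_substApply {M k : ℕ} (σ : Subst A) (a : A) {v : ℤ × ℤ}
    (hv : v ∈ sqSet (M ^ k)) :
    letterPattern M M σ k a v = substApply (M ^ k) (M ^ k) (iterSub M M σ k) (fun _ => a) v := by
  simpa [letterPattern] using (substApply_smul_add (iterSub M M σ k) (fun _ => a) 0 hv).symm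

lemma substApply_mem_Xsub {M : ℕ} (hM : 0 < M) {σ : Subst A} {c : Config A}
    (hc : c ∈ Xsub M M σ) : substApply M M σ c ∈ Xsub M M σ := by
  intro D hD
  obtain ⟨a, j, u, hu⟩ := hc (blockIndex M '' D) (hD.image _)
  refine ⟨a, j + 1, (M : ℤ) • u, fun v hv => ?_⟩
  obtain ⟨b, hb, hvb⟩ := exists_smul_blockIndex_add_eq hM v
  obtain ⟨hsupp, hval⟩ := hu _ ⟨v, hv, rfl⟩
  generalize blockIndex M v = w at hvb hsupp hval
  subst hvb
  rw [letterSupport_eq_sqSet] at hsupp ⊢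
  have hshift : (M : ℤ) • w + b - (M : ℤ) • u = (M : ℤ) • (w - u) + b := by
    rw [smul_sub]; abel
  have hsupp' : (M : ℤ) • (w - u) + b ∈ sqSet (M ^ (j + 1)) := by
    rw [pow_succ']; exact smul_add_mem_sqSet hsupp hb
  rw [hshift]
  refine ⟨hsupp', ?_⟩
  rw [letterPattern_eq_substApply σ a hsupp', substApply_smul_add _ _ _ hb, hval,
    letterPattern_eq_substApply σ a hsupp, ← substApply_smul_add σ _ _ hb,
    substApply_substApply hM (pow_pos hM j), pow_succ']
  rfl

lemma substApply_iterSub_mem_Xsub {M : ℕ} (hM : 0 < M) {σ : Subst A} {c : Config A}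
    (hc : c ∈ Xsub M M σ) (k : ℕ) :
    substApply (M ^ k) (M ^ k) (iterSub M M σ k) c ∈ Xsub M M σ := by
  induction k with
  | zero =>
    convert hc using 1
    funext v
    simp [substApply, iterSub]
  | succ k ih =>
    have h := substApply_mem_Xsub hM ih
    rwa [substApply_substApply hM (pow_pos hM k), ← pow_succ'] at h

lemma Int.emod_mul_eq_of_emod_eq {a b m n : ℤ} (h₁ : a % m = b % m) (h₂ : a / m % n = b / m % n) :
    a % (m * n) = b % (m * n) := by
  rw [← Int.emod_add_mul_ediv a m, ← Int.emod_add_mul_ediv b m, h₁]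
  exact Int.ModEq.add_left _ (Int.ModEq.mul_left' h₂)

lemma zero_mem_sqSet {M : ℕ} (hM : 0 < M) : (0 : ℤ × ℤ) ∈ sqSet M :=
  ⟨le_rfl, Int.natCast_pos.2 hM, le_rfl, Int.natCast_pos.2 hM⟩

lemma emod_mem_sqSet {M : ℕ} (hM : 0 < M) (t : ℤ × ℤ) : (t.1 % M, t.2 % M) ∈ sqSet M := by
  have hM' : (0 : ℤ) < M := by exact_mod_cast hM
  exact ⟨Int.emod_nonneg _ hM'.ne', Int.emod_lt_of_pos _ hM', Int.emod_nonneg _ hM'.ne',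
    Int.emod_lt_of_pos _ hM'⟩

lemma substApply_sub_eq_emod {M : ℕ} (hM : 0 < M) (σ : Subst A) (c : ℤ × ℤ → A) (t v : ℤ × ℤ) :
    substApply M M σ c (v - t) =
      substApply M M σ (fun u => c (u - (t.1 / M, t.2 / M))) (v - (t.1 % M, t.2 % M)) := by
  have ht : t = (t.1 % M, t.2 % M) + (M : ℤ) • (t.1 / M, t.2 / M) := by
    ext <;> simp [Int.emod_add_mul_ediv]
  rw [← substApply_sub_smul hM, sub_sub, ← ht]

lemma substApply_congr {M : ℕ} (σ : Subst A) {d d' : ℤ × ℤ → A} {v : ℤ × ℤ}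
    (h : d (blockIndex M v) = d' (blockIndex M v)) :
    substApply M M σ d v = substApply M M σ d' v := by
  show σ (d (blockIndex M v)) _ _ = σ (d' (blockIndex M v)) _ _
  rw [h]

lemma eqOn_of_substApply_sub_eq {M r : ℕ} {σ : Subst A} (hinv : Invertible' M M σ)
    {D : Set (ℤ × ℤ)} (hD : sqSet (M * (r + 1) - 1) ⊆ D) {t₀ : ℤ × ℤ} (ht₀ : t₀ ∈ sqSet M)
    {d d' : ℤ × ℤ → A} (h : ∀ v ∈ D, substApply M M σ d (v - t₀) = substApply M M σ d' (v - t₀)) :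
    Set.EqOn d d' (sqSet r) := by
  intro w hw
  apply hinv
  intro i hi j hj
  have hb : ((i : ℤ), (j : ℤ)) ∈ sqSet M :=
    ⟨by positivity, Int.ofNat_lt.2 hi, by positivity, Int.ofNat_lt.2 hj⟩
  have hij := h _ (hD (add_smul_add_mem_sqSet ht₀ hw hb))
  rwa [add_assoc, add_sub_cancel_left, substApply_smul_add _ _ _ hb, substApply_smul_add _ _ _ hb,
    Int.toNat_natCast, Int.toNat_natCast] at hij

def UniqueDesubOnSquares (N : ℕ) (τ : Subst A) (Xs : Set (Config A)) (r : ℕ) : Prop :=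
  ∀ (D : Set (ℤ × ℤ)) (p : ℤ × ℤ → A), sqSet r ⊆ D →
    (∃ c ∈ Xs, AppearsInConfig D p c) → UniqueDesub N N τ Xs D p

namespace UniqueDesubOnSquares

variable {M N r : ℕ} {σ τ : Subst A} {Xs : Set (Config A)} {D : Set (ℤ × ℤ)} {p : ℤ × ℤ → A}

lemma mono {ρ : ℕ} (h : UniqueDesubOnSquares N τ Xs ρ) (hρ : ρ ≤ r) :
    UniqueDesubOnSquares N τ Xs r :=
  fun D p hD => h D p ((sqSet_mono hρ).trans hD)

lemma exists_compSub (hM : 0 < M) (hN : 0 < N) (hτ : UniqueDesubOnSquares N τ Xs r)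
    (hD : sqSet (M * (r + 1) - 1) ⊆ D) {t : ℤ × ℤ}
    {c : Config A} (hc : c ∈ Xs) (hp : ∀ v ∈ D, p v = substApply M M σ c (v - t)) :
    ∃ t' : ℤ × ℤ, ∃ c' ∈ Xs, ∀ v ∈ D,
      p v = substApply (M * N) (M * N) (compSub M M σ τ) c' (v - t') := by
  set t₀ : ℤ × ℤ := (t.1 % M, t.2 % M)
  set f : ℤ × ℤ := (t.1 / M, t.2 / M)
  set c₀ : Config A := fun u => c (u - f)
  set D' := (fun v => blockIndex M (v - t₀)) '' D
  have hD' : sqSet r ⊆ D' := fun w hw =>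
    ⟨t₀ + (M : ℤ) • w + 0, hD (add_smul_add_mem_sqSet (emod_mem_sqSet hM t) hw (zero_mem_sqSet hM)),
      by simp only [add_assoc, add_sub_cancel_left, blockIndex_smul_add w (zero_mem_sqSet hM)]⟩
  obtain ⟨⟨s, c', hc', hs⟩, -⟩ := hτ D' c₀ hD' ⟨c, hc, f, fun _ _ => rfl⟩
  refine ⟨t₀ + (M : ℤ) • s, c', hc', fun v hv => ?_⟩
  rw [hp v hv, substApply_sub_eq_emod hM, ← substApply_substApply hM hN, ← sub_sub,
    substApply_sub_smul hM]
  exact substApply_congr σ (hs _ ⟨v, hv, rfl⟩)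

lemma emod_eq_of_compSub (hM : 0 < M) (hN : 0 < N) (hinv : Invertible' M M σ)
    (hXs : ∀ c ∈ Xs, substApply N N τ c ∈ Xs) (hσ : UniqueDesub M M σ Xs D p)
    (hτ : UniqueDesubOnSquares N τ Xs r) (hD : sqSet (M * (r + 1) - 1) ⊆ D) {t t' : ℤ × ℤ}
    (ht : ∃ c ∈ Xs, ∀ v ∈ D, p v = substApply (M * N) (M * N) (compSub M M σ τ) c (v - t))
    (ht' : ∃ c ∈ Xs, ∀ v ∈ D, p v = substApply (M * N) (M * N) (compSub M M σ τ) c (v - t')) :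
    t.1 % ((M * N : ℕ) : ℤ) = t'.1 % ((M * N : ℕ) : ℤ) ∧
      t.2 % ((M * N : ℕ) : ℤ) = t'.2 % ((M * N : ℕ) : ℤ) := by
  obtain ⟨c, hc, hp⟩ := ht
  obtain ⟨c', hc', hp'⟩ := ht'
  simp only [← substApply_substApply hM hN] at hp hp'
  obtain ⟨h₁, h₂⟩ := hσ.2 t t' ⟨_, hXs c hc, hp⟩ ⟨_, hXs c' hc', hp'⟩
  have hagree := eqOn_of_substApply_sub_eq hinv hD (emod_mem_sqSet hM t)
    (d := fun u => substApply N N τ c (u - (t.1 / M, t.2 / M)))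
    (d' := fun u => substApply N N τ c' (u - (t'.1 / M, t'.2 / M))) fun v hv => by
      conv_rhs => rw [h₁, h₂]
      rw [← substApply_sub_eq_emod hM, ← substApply_sub_eq_emod hM, ← hp v hv, hp' v hv]
  obtain ⟨h₁', h₂'⟩ := (hτ (sqSet r) _ subset_rfl ⟨_, hXs c hc, _, fun _ _ => rfl⟩).2 _ _
    ⟨c, hc, fun _ _ => rfl⟩ ⟨c', hc', hagree⟩
  push_cast
  exact ⟨Int.emod_mul_eq_of_emod_eq h₁ h₁', Int.emod_mul_eq_of_emod_eq h₂ h₂'⟩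

theorem compSub {ρ : ℕ} (hM : 0 < M) (hN : 0 < N) (hinv : Invertible' M M σ)
    (hXs : ∀ c ∈ Xs, substApply N N τ c ∈ Xs) (hσ : UniqueDesubOnSquares M σ Xs ρ)
    (hτ : UniqueDesubOnSquares N τ Xs r) (hρ : ρ ≤ M * (r + 1) - 1) :
    UniqueDesubOnSquares (M * N) (compSub M M σ τ) Xs (M * (r + 1) - 1) := by
  intro D p hD happ
  have hσD := hσ.mono hρ D p hD happ
  obtain ⟨t, c, hc, hp⟩ := hσD.1
  exact ⟨exists_compSub hM hN hτ hD hc hp,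
    fun t t' => emod_eq_of_compSub hM hN hinv hXs hσD hτ hD⟩

end UniqueDesubOnSquares

lemma uniqueDesubOnSquares_iterSub {M ρ : ℕ} (hM : 0 < M) {σ : Subst A}
    (hinv : Invertible' M M σ) (H : UniqueDesubOnSquares M σ (Xsub M M σ) ρ) (k : ℕ) :
    UniqueDesubOnSquares (M ^ (k + 1)) (iterSub M M σ (k + 1)) (Xsub M M σ)
      ((ρ + 1) * M ^ k - 1) := by
  induction k with
  | zero =>
    unfold UniqueDesubOnSquares UniqueDesub
    simp only [pow_zero, mul_one, Nat.add_sub_cancel, zero_add, pow_one,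
      substApply_iterSub_one hM]
    exact H
  | succ k ih =>
    have hpos : 1 ≤ (ρ + 1) * M ^ k := Nat.one_le_iff_ne_zero.2 (by positivity)
    have hr : M * ((ρ + 1) * M ^ k - 1 + 1) - 1 = (ρ + 1) * M ^ (k + 1) - 1 := by
      rw [Nat.sub_add_cancel hpos, pow_succ]; ring_nf
    have hρ : ρ ≤ (ρ + 1) * M ^ (k + 1) - 1 := by
      have := Nat.le_mul_of_pos_right (ρ + 1) (pow_pos hM (k + 1)); omega
    have h := UniqueDesubOnSquares.compSub hM (pow_pos hM (k + 1)) hinv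
      (fun c hc => substApply_iterSub_mem_Xsub hM hc (k + 1)) H ih (hr ▸ hρ)
    rwa [hr, ← pow_succ'] at h

end

theorem uniqueDesub_iter_general {A : Type*} (M : ℕ) (hM : 0 < M) (σ : Subst A)
    (hinv : Invertible' M M σ) (ρ : ℕ)
    (H : ∀ (D : Set (ℤ × ℤ)) (p : ℤ × ℤ → A), sqSet ρ ⊆ D →
      (∃ c ∈ Xsub M M σ, AppearsInConfig D p c) →
      UniqueDesub M M σ (Xsub M M σ) D p) :
    ∀ k : ℕ, 1 ≤ k → ∀ (D : Set (ℤ × ℤ)) (p : ℤ × ℤ → A),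
      sqSet ((ρ + 1) * M ^ (k - 1) - 1) ⊆ D →
      (∃ c ∈ Xsub M M σ, AppearsInConfig D p c) →
      UniqueDesub (M ^ k) (M ^ k) (iterSub M M σ k) (Xsub M M σ) D p := by
  intro k hk
  obtain ⟨k, rfl⟩ := Nat.exists_eq_add_of_le' hk
  exact uniqueDesubOnSquares_iterSub hM hinv H k

/-- If `σ` is an invertible substitution of size `(M,M)` such that every
pattern of `L(X^σ)` whose support contains `{0,…,ρ−1}²` can be uniquely
desubstituted by `σ`, then for every `k ≥ 1` every pattern of `L(X^σ)` whose
support contains `{0,…,(ρ+1)M^{k−1} − 2}²` can be uniquely desubstituted by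
`σ^k`. -/
theorem uniqueDesub_iter {A : Type*} (M : ℕ) (hM : 0 < M) (σ : Subst A)
    (hinv : Invertible' M M σ) (ρ : ℕ) (hρ : 0 < ρ)
    (H : ∀ (D : Set (ℤ × ℤ)) (p : ℤ × ℤ → A), sqSet ρ ⊆ D →
      (∃ c ∈ Xsub M M σ, AppearsInConfig D p c) →
      UniqueDesub M M σ (Xsub M M σ) D p) :
    ∀ k : ℕ, 1 ≤ k → ∀ (D : Set (ℤ × ℤ)) (p : ℤ × ℤ → A),
      sqSet ((ρ + 1) * M ^ (k - 1) - 1) ⊆ D →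
      (∃ c ∈ Xsub M M σ, AppearsInConfig D p c) →
      UniqueDesub (M ^ k) (M ^ k) (iterSub M M σ k) (Xsub M M σ) D p :=
  uniqueDesub_iter_general M hM σ hinv ρ H
end
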